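/- arXiv:1906.08579 — 3 statements merged into one kernel-verified Lean document; each statement's English description precedes it below -/
import Mathlib

section
/- Under the hypotheses of the previous estimate, if in addition Qₙ → Q uniformly strongly (i.e., for every x ∈ Y, Qₙ(·)x → Q(·)x uniformly on [0,T]), then for each fixed s, Ψ^{(n)}_{t,s}x → Ψ_{t,s}x uniformly in t ∈ [s,T], for every x ∈ Y. -/
open MeasureTheory intervalIntegral

lemma myGronwall_nonneg {K ε x : ℝ} (hK : 0 ≤ K) (hε : 0 ≤ ε) (hx : 0 ≤ x) :
    0 ≤ gronwallBound 0 K ε x := by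
  rcases eq_or_ne K 0 with h | h
  · simp [h, gronwallBound_K0]; positivity
  · rw [gronwallBound_of_K_ne_0 h]
    have hKpos : 0 < K := lt_of_le_of_ne hK (Ne.symm h)
    have h1 : (1:ℝ) ≤ Real.exp (K * x) := by
      rw [← Real.exp_zero]; exact Real.exp_le_exp.mpr (by positivity)
    have := sub_nonneg.mpr h1
    positivity

lemma myGronwall_mono {K ε x y : ℝ} (hK : 0 ≤ K) (hε : 0 ≤ ε) (hxy : x ≤ y) :
    gronwallBound 0 K ε x ≤ gronwallBound 0 K ε y := by
  rcases eq_or_ne K 0 with h | h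
  · simp only [h, gronwallBound_K0]; nlinarith
  · rw [gronwallBound_of_K_ne_0 h]
    have hKpos : 0 < K := lt_of_le_of_ne hK (Ne.symm h)
    have : Real.exp (K * x) ≤ Real.exp (K * y) :=
      Real.exp_le_exp.mpr (by nlinarith)
    simp only [zero_mul, zero_add]
    have hd : 0 ≤ ε / K := by positivity
    nlinarith

lemma myGronwall_smul (K a ε x : ℝ) :
    gronwallBound 0 K (a * ε) x = a * gronwallBound 0 K ε x := by
  rcases eq_or_ne K 0 with h | h
  · simp [h, gronwallBound_K0]; ring
  · simp [gronwallBound_of_K_ne_0 h]; ring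

/-- composing a strongly continuous operator family with a continuous vector path. -/
lemma strong_comp_continuousOn {Y : Type*} [NormedAddCommGroup Y] [NormedSpace ℝ Y]
    (A : ℝ → Y →L[ℝ] Y) (v : ℝ → Y) (C : Set ℝ) (M : ℝ)
    (hA : ∀ y : Y, ContinuousOn (fun r => A r y) C)
    (hM : ∀ r ∈ C, ‖A r‖ ≤ M)
    (hv : ContinuousOn v C) :
    ContinuousOn (fun r => A r (v r)) C := by
  intro r₀ hr₀
  have h1 : ContinuousWithinAt (fun r => A r (v r₀)) C r₀ := hA (v r₀) r₀ hr₀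
  have h2 : Filter.Tendsto (fun r => A r (v r) - A r (v r₀)) (nhdsWithin r₀ C) (nhds 0) := by
    refine squeeze_zero_norm' (a := fun r => M * ‖v r - v r₀‖) ?_ ?_
    · filter_upwards [self_mem_nhdsWithin] with r hr
      calc ‖A r (v r) - A r (v r₀)‖ = ‖A r (v r - v r₀)‖ := by rw [map_sub]
        _ ≤ ‖A r‖ * ‖v r - v r₀‖ := (A r).le_opNorm _
        _ ≤ M * ‖v r - v r₀‖ :=
            mul_le_mul_of_nonneg_right (hM r hr) (norm_nonneg _)
    · have h3 : Filter.Tendsto v (nhdsWithin r₀ C) (nhds (v r₀)) := hv r₀ hr₀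
      have := (h3.sub (tendsto_const_nhds (x := v r₀) (f := nhdsWithin r₀ C))).norm
      have h4 := this.const_mul M
      simpa using h4
  have : ContinuousWithinAt (fun r => (A r (v r) - A r (v r₀)) + A r (v r₀)) C r₀ := by
    unfold ContinuousWithinAt
    have := h2.add h1
    simpa using this
  simpa using this

set_option maxHeartbeats 2000000 in
/-- continuous dependence of the perturbed evolution family on the perturbation. -/
theorem perturbed_evolution_family_convergence
    {Y : Type*} [NormedAddCommGroup Y] [NormedSpace ℝ Y] [CompleteSpace Y]
    (T : ℝ) (hT : 0 ≤ T)
    (U : ℝ → ℝ → Y →L[ℝ] Y) (M_U : ℝ)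
    (hUbdd : ∀ s t : ℝ, 0 ≤ s → s ≤ t → t ≤ T → ‖U t s‖ ≤ M_U)
    (hUsc : ∀ x : Y, ∀ s ∈ Set.Icc 0 T, ContinuousOn (fun t => U t s x) (Set.Icc s T))
    (hUsc' : ∀ x : Y, ∀ t ∈ Set.Icc 0 T, ContinuousOn (fun s => U t s x) (Set.Icc 0 t))
    (Q : ℝ → Y →L[ℝ] Y) (Qn : ℕ → ℝ → Y →L[ℝ] Y) (M_Q : ℝ)
    (hQsc : ∀ x : Y, ContinuousOn (fun t => Q t x) (Set.Icc 0 T))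
    (hQnsc : ∀ n, ∀ x : Y, ContinuousOn (fun t => Qn n t x) (Set.Icc 0 T))
    (hQbdd : ∀ t ∈ Set.Icc 0 T, ‖Q t‖ ≤ M_Q)
    (hQnbdd : ∀ n, ∀ t ∈ Set.Icc 0 T, ‖Qn n t‖ ≤ M_Q)
    (Ψ : ℝ → ℝ → Y →L[ℝ] Y) (Ψn : ℕ → ℝ → ℝ → Y →L[ℝ] Y) (M_Ψ : ℝ)
    (hΨbdd : ∀ s t : ℝ, 0 ≤ s → s ≤ t → t ≤ T → ‖Ψ t s‖ ≤ M_Ψ)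
    (hΨnbdd : ∀ n, ∀ s t : ℝ, 0 ≤ s → s ≤ t → t ≤ T → ‖Ψn n t s‖ ≤ M_Ψ)
    (hΨsc : ∀ x : Y, ∀ s ∈ Set.Icc 0 T, ContinuousOn (fun t => Ψ t s x) (Set.Icc s T))
    (hΨnsc : ∀ n, ∀ x : Y, ∀ s ∈ Set.Icc 0 T,
      ContinuousOn (fun t => Ψn n t s x) (Set.Icc s T))
    -- the perturbation integral equations, in the strong sense
    (hΨeq : ∀ x : Y, ∀ s t : ℝ, 0 ≤ s → s ≤ t → t ≤ T →
      Ψ t s x = U t s x + ∫ r in s..t, U t r (Q r (Ψ r s x)))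
    (hΨneq : ∀ n, ∀ x : Y, ∀ s t : ℝ, 0 ≤ s → s ≤ t → t ≤ T →
      Ψn n t s x = U t s x + ∫ r in s..t, U t r (Qn n r (Ψn n r s x)))
    -- uniform strong convergence Qₙ → Q
    (hQconv : ∀ x : Y, TendstoUniformlyOn (fun n t => Qn n t x) (fun t => Q t x)
      Filter.atTop (Set.Icc 0 T)) :
    ∀ x : Y, ∀ s : ℝ, 0 ≤ s → s ≤ T →
      TendstoUniformlyOn (fun n t => Ψn n t s x) (fun t => Ψ t s x)
        Filter.atTop (Set.Icc s T) := by
  intro x s hs0 hsT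
  have hMU : 0 ≤ M_U := le_trans (norm_nonneg _) (hUbdd 0 0 le_rfl le_rfl hT)
  have hMQ : 0 ≤ M_Q := le_trans (norm_nonneg _) (hQbdd 0 ⟨le_rfl, hT⟩)
  set K : ℝ := M_U * M_Q with hKdef
  have hK : 0 ≤ K := mul_nonneg hMU hMQ
  have hTs : 0 ≤ T - s := sub_nonneg.mpr hsT
  set G : ℝ := gronwallBound 0 K (M_U * (T - s)) (T - s) with hGdef
  have hG0 : 0 ≤ G := myGronwall_nonneg hK (by positivity) hTs
  set C : ℝ := K * G + M_U * (T - s) + 1 with hCdef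
  have hC1 : 1 ≤ C := by nlinarith
  have hCpos : 0 < C := by linarith
  rw [Metric.tendstoUniformlyOn_iff]
  intro ε hε
  set δ : ℝ := ε / C with hδdef
  have hδpos : 0 < δ := div_pos hε hCpos
  -- compact trajectory and finite covering
  have hΨcont : ContinuousOn (fun r => Ψ r s x) (Set.Icc s T) := hΨsc x s ⟨hs0, hsT⟩
  have hKcompact : IsCompact ((fun r => Ψ r s x) '' Set.Icc s T) :=
    isCompact_Icc.image_of_continuousOn hΨcont
  set ρ : ℝ := δ / (2 * (2 * M_Q + 1)) with hρdef
  have hρpos : 0 < ρ := by positivity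
  obtain ⟨fs, hfs⟩ := hKcompact.elim_finite_subcover (fun y : Y => Metric.ball y ρ)
    (fun y => Metric.isOpen_ball)
    (fun z hz => Set.mem_iUnion.mpr ⟨z, Metric.mem_ball_self hρpos⟩)
  have hev : ∀ᶠ n in Filter.atTop, ∀ y ∈ fs, ∀ r ∈ Set.Icc (0:ℝ) T,
      dist (Q r y) (Qn n r y) < δ / 2 := by
    rw [Filter.eventually_all_finset]
    intro y _
    exact (Metric.tendstoUniformlyOn_iff.mp (hQconv y)) (δ / 2) (by positivity)
  filter_upwards [hev] with n hn
  -- δ-bound on (Qn - Q) along the trajectory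
  have hδb : ∀ r ∈ Set.Icc s T, ‖Qn n r (Ψ r s x) - Q r (Ψ r s x)‖ ≤ δ := by
    intro r hr
    have hr0T : r ∈ Set.Icc (0:ℝ) T := ⟨le_trans hs0 hr.1, hr.2⟩
    have hy : Ψ r s x ∈ (fun r => Ψ r s x) '' Set.Icc s T := ⟨r, hr, rfl⟩
    obtain ⟨z, hzfs, hz⟩ := Set.mem_iUnion₂.mp (hfs hy)
    have hdz : ‖Ψ r s x - z‖ ≤ ρ := by
      rw [Metric.mem_ball, dist_eq_norm] at hz; exact hz.le
    have h1 : ‖Qn n r (Ψ r s x) - Qn n r z‖ ≤ M_Q * ρ := by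
      rw [← map_sub]
      calc ‖Qn n r (Ψ r s x - z)‖ ≤ ‖Qn n r‖ * ‖Ψ r s x - z‖ := (Qn n r).le_opNorm _
        _ ≤ M_Q * ρ := mul_le_mul (hQnbdd n r hr0T) hdz (norm_nonneg _) hMQ
    have h2 : ‖Q r z - Q r (Ψ r s x)‖ ≤ M_Q * ρ := by
      rw [← map_sub]
      calc ‖Q r (z - Ψ r s x)‖ ≤ ‖Q r‖ * ‖z - Ψ r s x‖ := (Q r).le_opNorm _
        _ ≤ M_Q * ρ := by
            rw [norm_sub_rev]
            exact mul_le_mul (hQbdd r hr0T) hdz (norm_nonneg _) hMQ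
    have h3 : ‖Qn n r z - Q r z‖ ≤ δ / 2 := by
      have := hn z hzfs r hr0T
      rw [dist_eq_norm, norm_sub_rev] at this
      exact this.le
    have hsplit : ‖Qn n r (Ψ r s x) - Q r (Ψ r s x)‖ ≤
        ‖Qn n r (Ψ r s x) - Qn n r z‖ + ‖Qn n r z - Q r z‖ + ‖Q r z - Q r (Ψ r s x)‖ := by
      have := norm_add₃_le (a := Qn n r (Ψ r s x) - Qn n r z) (b := Qn n r z - Q r z)
        (c := Q r z - Q r (Ψ r s x))
      simpa using this
    have hρb : M_Q * ρ + M_Q * ρ ≤ δ / 2 := by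
      have h2M : (0:ℝ) < 2 * (2 * M_Q + 1) := by linarith
      have key : M_Q * ρ ≤ δ / 4 := by
        rw [hρdef, ← mul_div_assoc, div_le_div_iff₀ h2M (by norm_num : (0:ℝ) < 4)]
        nlinarith [hδpos.le]
      linarith
    linarith
  -- the difference function and its integral
  set f : ℝ → Y := fun t => Ψn n t s x - Ψ t s x with hfdef
  set g : ℝ → ℝ := fun t => ∫ r in s..t, ‖f r‖ with hgdef
  set c : ℝ := M_U * δ * (T - s) with hcdef
  have hc0 : 0 ≤ c := by positivity
  have hfc : ContinuousOn f (Set.Icc s T) :=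
    (hΨnsc n x s ⟨hs0, hsT⟩).sub (hΨsc x s ⟨hs0, hsT⟩)
  have hfnc : ContinuousOn (fun r => ‖f r‖) (Set.Icc s T) := hfc.norm
  have hfint : IntegrableOn (fun r => ‖f r‖) (Set.uIcc s T) volume := by
    rw [Set.uIcc_of_le hsT]; exact hfnc.integrableOn_Icc
  have hgc : ContinuousOn g (Set.Icc s T) := by
    have := continuousOn_primitive_interval (μ := volume) hfint
    rwa [Set.uIcc_of_le hsT] at this
  have hgd : ∀ t ∈ Set.Ico s T, HasDerivWithinAt g (‖f t‖) (Set.Ici t) t := by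
    intro t ht
    have hii : IntervalIntegrable (fun r => ‖f r‖) volume s t := by
      apply ContinuousOn.intervalIntegrable
      rw [Set.uIcc_of_le ht.1]
      exact hfnc.mono (Set.Icc_subset_Icc le_rfl ht.2.le)
    have hIocmem : Set.Ioc t T ∈ nhdsWithin t (Set.Ioi t) := Ioc_mem_nhdsGT ht.2
    have hIccmem : Set.Icc s T ∈ nhdsWithin t (Set.Ioi t) :=
      Filter.mem_of_superset hIocmem
        (fun r hr => ⟨le_trans ht.1 hr.1.le, hr.2⟩)
    have hmeas : StronglyMeasurableAtFilter (fun r => ‖f r‖) (nhdsWithin t (Set.Ioi t)) :=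
      ⟨Set.Ioc t T, hIocmem,
        ((hfnc.mono (fun r hr => ⟨le_trans ht.1 hr.1.le, hr.2⟩)).aestronglyMeasurable
          measurableSet_Ioc)⟩
    have hcw : ContinuousWithinAt (fun r => ‖f r‖) (Set.Ioi t) t :=
      (hfnc t ⟨ht.1, ht.2.le⟩).mono_of_mem_nhdsWithin hIccmem
    exact intervalIntegral.integral_hasDerivWithinAt_right hii hmeas hcw
  -- key integral estimate
  have hft : ∀ t ∈ Set.Icc s T, ‖f t‖ ≤ K * g t + c := by
    intro t ht
    obtain ⟨hst, htT⟩ := ht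
    have hsub0T : Set.Icc s t ⊆ Set.Icc (0:ℝ) T :=
      Set.Icc_subset_Icc hs0 htT
    have hsubsT : Set.Icc s t ⊆ Set.Icc s T :=
      Set.Icc_subset_Icc le_rfl htT
    have hAn : ContinuousOn (fun r => U t r (Qn n r (Ψn n r s x))) (Set.Icc s t) := by
      apply strong_comp_continuousOn (M := M_U)
      · intro y
        exact (hUsc' y t ⟨le_trans hs0 hst, htT⟩).mono (Set.Icc_subset_Icc hs0 le_rfl)
      · intro r hr
        exact hUbdd r t (le_trans hs0 hr.1) hr.2 htT
      · apply strong_comp_continuousOn (M := M_Q)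
        · intro y; exact (hQnsc n y).mono hsub0T
        · intro r hr; exact hQnbdd n r (hsub0T hr)
        · exact (hΨnsc n x s ⟨hs0, hsT⟩).mono hsubsT
    have hB : ContinuousOn (fun r => U t r (Q r (Ψ r s x))) (Set.Icc s t) := by
      apply strong_comp_continuousOn (M := M_U)
      · intro y
        exact (hUsc' y t ⟨le_trans hs0 hst, htT⟩).mono (Set.Icc_subset_Icc hs0 le_rfl)
      · intro r hr
        exact hUbdd r t (le_trans hs0 hr.1) hr.2 htT
      · apply strong_comp_continuousOn (M := M_Q)
        · intro y; exact (hQsc y).mono hsub0T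
        · intro r hr; exact hQbdd r (hsub0T hr)
        · exact (hΨsc x s ⟨hs0, hsT⟩).mono hsubsT
    have hAi : IntervalIntegrable (fun r => U t r (Qn n r (Ψn n r s x))) volume s t := by
      apply ContinuousOn.intervalIntegrable; rwa [Set.uIcc_of_le hst]
    have hBi : IntervalIntegrable (fun r => U t r (Q r (Ψ r s x))) volume s t := by
      apply ContinuousOn.intervalIntegrable; rwa [Set.uIcc_of_le hst]
    have heq : f t = ∫ r in s..t,
        (U t r (Qn n r (Ψn n r s x)) - U t r (Q r (Ψ r s x))) := by
      rw [intervalIntegral.integral_sub hAi hBi]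
      have e1 := hΨneq n x s t hs0 hst htT
      have e2 := hΨeq x s t hs0 hst htT
      rw [hfdef]
      simp only [e1, e2]
      abel
    have hfi : IntervalIntegrable (fun r => ‖f r‖) volume s t := by
      apply ContinuousOn.intervalIntegrable
      rw [Set.uIcc_of_le hst]
      exact hfnc.mono hsubsT
    have hRi : IntervalIntegrable (fun r => K * ‖f r‖ + M_U * δ) volume s t :=
      (hfi.const_mul K).add intervalIntegrable_const
    have hbound : ∀ r ∈ Set.Icc s t,
        ‖U t r (Qn n r (Ψn n r s x)) - U t r (Q r (Ψ r s x))‖ ≤ K * ‖f r‖ + M_U * δ := by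
      intro r hr
      have hr0 : 0 ≤ r := le_trans hs0 hr.1
      have hinner : ‖Qn n r (Ψn n r s x) - Q r (Ψ r s x)‖ ≤ M_Q * ‖f r‖ + δ := by
        have hsplit : Qn n r (Ψn n r s x) - Q r (Ψ r s x)
            = Qn n r (f r) + (Qn n r (Ψ r s x) - Q r (Ψ r s x)) := by
          rw [hfdef]
          simp only [map_sub]
          abel
        rw [hsplit]
        refine le_trans (norm_add_le _ _) (add_le_add ?_ (hδb r (hsubsT hr)))
        calc ‖Qn n r (f r)‖ ≤ ‖Qn n r‖ * ‖f r‖ := (Qn n r).le_opNorm _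
          _ ≤ M_Q * ‖f r‖ :=
              mul_le_mul_of_nonneg_right (hQnbdd n r (hsub0T hr)) (norm_nonneg _)
      rw [← map_sub]
      calc ‖U t r (Qn n r (Ψn n r s x) - Q r (Ψ r s x))‖
          ≤ ‖U t r‖ * ‖Qn n r (Ψn n r s x) - Q r (Ψ r s x)‖ := (U t r).le_opNorm _
        _ ≤ M_U * (M_Q * ‖f r‖ + δ) :=
            mul_le_mul (hUbdd r t hr0 hr.2 htT) hinner (norm_nonneg _) hMU
        _ = K * ‖f r‖ + M_U * δ := by rw [hKdef]; ring
    have hval : (∫ r in s..t, (K * ‖f r‖ + M_U * δ)) = K * g t + M_U * δ * (t - s) := by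
      rw [intervalIntegral.integral_add (hfi.const_mul K) intervalIntegrable_const,
        intervalIntegral.integral_const_mul, intervalIntegral.integral_const,
        smul_eq_mul, hgdef]
      ring
    calc ‖f t‖ = ‖∫ r in s..t,
          (U t r (Qn n r (Ψn n r s x)) - U t r (Q r (Ψ r s x)))‖ := by rw [heq]
      _ ≤ ∫ r in s..t,
          ‖U t r (Qn n r (Ψn n r s x)) - U t r (Q r (Ψ r s x))‖ :=
          intervalIntegral.norm_integral_le_integral_norm hst
      _ ≤ ∫ r in s..t, (K * ‖f r‖ + M_U * δ) := by
          apply intervalIntegral.integral_mono_on hst ((hAi.sub hBi).norm) hRi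
          exact hbound
      _ = K * g t + M_U * δ * (t - s) := hval
      _ ≤ K * g t + c := by
          rw [hcdef]
          have : M_U * δ * (t - s) ≤ M_U * δ * (T - s) :=
            mul_le_mul_of_nonneg_left (by linarith) (by positivity)
          linarith
  -- Grönwall
  have hgs : g s = 0 := by rw [hgdef]; simp
  have hgb : ∀ t ∈ Set.Icc s T, ‖g t‖ ≤ gronwallBound 0 K c (t - s) := by
    apply norm_le_gronwallBound_of_norm_deriv_right_le hgc hgd
    · rw [hgs]; simp
    · intro t ht
      rw [Real.norm_eq_abs, abs_of_nonneg (norm_nonneg _)]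
      calc ‖f t‖ ≤ K * g t + c := hft t ⟨ht.1, ht.2.le⟩
        _ ≤ K * ‖g t‖ + c := by
            have : g t ≤ ‖g t‖ := le_abs_self _
            nlinarith
  -- conclusion
  intro t ht
  rw [dist_eq_norm]
  have hnf : ‖Ψ t s x - Ψn n t s x‖ = ‖f t‖ := by rw [hfdef, norm_sub_rev]
  rw [hnf]
  have hδC : δ * C = ε := by
    rw [hδdef]; field_simp
  have hcδ : c = δ * (M_U * (T - s)) := by rw [hcdef]; ring
  have hgBeq : gronwallBound 0 K c (T - s) = δ * G := by
    rw [hcδ, hGdef, myGronwall_smul]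
  calc ‖f t‖ ≤ K * g t + c := hft t ht
    _ ≤ K * ‖g t‖ + c := by
        have : g t ≤ ‖g t‖ := le_abs_self _
        nlinarith
    _ ≤ K * gronwallBound 0 K c (t - s) + c :=
        add_le_add_left (mul_le_mul_of_nonneg_left (hgb t ht) hK) _
    _ ≤ K * gronwallBound 0 K c (T - s) + c :=
        add_le_add_left (mul_le_mul_of_nonneg_left
          (myGronwall_mono hK hc0 (by linarith [ht.2])) hK) _
    _ = δ * (C - 1) := by rw [hgBeq, hcδ, hCdef]; ring
    _ < δ * C := by nlinarith
    _ = ε := hδC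
end

section
/- Let X₁, X₂ be Banach spaces, U⃖_{t,s} a strongly continuous uniformly bounded forward evolution family in L(X₁), U⃗_{t,s} a strongly continuous uniformly bounded backward evolution family in L(X₂), Q₁₂ : [0,T] → L(X₁,X₂) and Q₁ : [0,T] → L(X₁) strongly continuous, and Ω⃖_{t,s} the unique strongly continuous uniformly bounded forward evolution family satisfying Ω⃖_{t,s} = U⃖_{t,s} − ∫_s^t Ω⃖_{t,r} Q₁(r) U⃖_{r,s} dr. Then for every G ∈ L(X₁,X₂), the function P(t) = U⃗_{t,T} G Ω⃖_{T,t} + ∫_t^T U⃗_{t,r} Q₁₂(r) Ω⃖_{r,t} dr is the unique strongly continuous solution of the linear integral equation P(t) = U⃗_{t,T} G U⃖_{T,t} + ∫_t^T U⃗_{t,r}[Q₁₂(r) − P(r)Q₁(r)] U⃖_{r,t} dr. -/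
open MeasureTheory intervalIntegral Set Filter Topology

/-!
For each `t` the representation formula is a strong integral of a strongly continuous family,
hence (Banach–Steinhaus) a bounded operator `P t`. Substituting the Volterra equation
`Ω⃖_{s,t} = U⃖_{s,t} − ∫_t^s Ω⃖_{s,q} Q₁(q) U⃖_{q,t} dq` into it and exchanging the order of
integration over the triangle `t ≤ q ≤ r ≤ T`, the composition law of `U⃗` collects the correction
terms into `∫_t^T U⃗_{t,q} P(q) Q₁(q) U⃖_{q,t} dq`, which turns the formula into the linear equation.

The difference `D` of two solutions solves `D(t) = −∫_t^T U⃗_{t,r} D(r) Q₁(r) U⃖_{r,t} dr`, so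
`‖D(t)‖ ≤ K ∫_t^T ‖D(r)‖ dr`; iterating gives `‖D(t)‖ ≤ M (K (T − t))ⁿ / n!`, hence `D = 0`.
-/

section StrongContinuity

variable {𝕜 ι E F : Type*} [NontriviallyNormedField 𝕜] [TopologicalSpace ι]
  [NormedAddCommGroup E] [NormedSpace 𝕜 E] [NormedAddCommGroup F] [NormedSpace 𝕜 F]
  {s : Set ι} {A : ι → E →L[𝕜] F} {f : ι → E}

theorem ContinuousOn.clm_apply_of_norm_le {M : ℝ} (hf : ContinuousOn f s)
    (hA : ∀ y, ContinuousOn (fun i => A i y) s) (hM : ∀ i ∈ s, ‖A i‖ ≤ M) :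
    ContinuousOn (fun i => A i (f i)) s := by
  intro i₀ hi₀
  rw [ContinuousWithinAt, tendsto_iff_norm_sub_tendsto_zero]
  have hsplit : ∀ i ∈ s, ‖A i (f i) - A i₀ (f i₀)‖
      ≤ M * ‖f i - f i₀‖ + ‖A i (f i₀) - A i₀ (f i₀)‖ := fun i hi =>
    calc ‖A i (f i) - A i₀ (f i₀)‖ = ‖A i (f i - f i₀) + (A i (f i₀) - A i₀ (f i₀))‖ := by
          rw [map_sub]; abel_nf
      _ ≤ ‖A i‖ * ‖f i - f i₀‖ + ‖A i (f i₀) - A i₀ (f i₀)‖ :=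
          (norm_add_le _ _).trans (add_le_add ((A i).le_opNorm _) le_rfl)
      _ ≤ M * ‖f i - f i₀‖ + ‖A i (f i₀) - A i₀ (f i₀)‖ := by gcongr; exact hM i hi
  refine squeeze_zero' (Eventually.of_forall fun _ => norm_nonneg _)
    (eventually_nhdsWithin_of_forall hsplit) ?_
  have hf₀ := (tendsto_iff_norm_sub_tendsto_zero.1 (hf i₀ hi₀)).const_mul M
  have hA₀ := tendsto_iff_norm_sub_tendsto_zero.1 (hA (f i₀) i₀ hi₀)
  simpa using hf₀.add hA₀

variable [CompleteSpace E]

theorem IsCompact.exists_norm_le_of_continuousOn_apply (hs : IsCompact s)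
    (hA : ∀ y, ContinuousOn (fun i => A i y) s) : ∃ M, ∀ i ∈ s, ‖A i‖ ≤ M := by
  obtain ⟨M, hM⟩ := banach_steinhaus (g := fun i : s => A i) fun y => by
    obtain ⟨C, hC⟩ := hs.exists_bound_of_continuousOn (hA y)
    exact ⟨C, fun i => hC i i.2⟩
  exact ⟨M, fun i hi => hM ⟨i, hi⟩⟩

theorem IsCompact.continuousOn_clm_apply (hs : IsCompact s)
    (hA : ∀ y, ContinuousOn (fun i => A i y) s) (hf : ContinuousOn f s) :
    ContinuousOn (fun i => A i (f i)) s :=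
  let ⟨_, hM⟩ := hs.exists_norm_le_of_continuousOn_apply hA
  hf.clm_apply_of_norm_le hA hM

end StrongContinuity

section IntervalIntegral

variable {E F : Type*} [NormedAddCommGroup E] [NormedSpace ℝ E]
  [NormedAddCommGroup F] [NormedSpace ℝ F]

theorem exists_clm_intervalIntegral_apply [CompleteSpace E] {A : ℝ → E →L[ℝ] F} {a b : ℝ}
    (hA : ∀ x, ContinuousOn (fun r => A r x) (uIcc a b)) :
    ∃ L : E →L[ℝ] F, ∀ x, L x = ∫ r in a..b, A r x := by
  obtain ⟨M, hM⟩ := isCompact_uIcc.exists_norm_le_of_continuousOn_apply hA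
  have hint : ∀ x, IntervalIntegrable (fun r => A r x) volume a b :=
    fun x => (hA x).intervalIntegrable
  refine ⟨LinearMap.mkContinuousOfExistsBound
    { toFun := fun x => ∫ r in a..b, A r x
      map_add' := fun x y => by
        simp only [map_add]; exact integral_add (hint x) (hint y)
      map_smul' := fun c x => by
        simp only [map_smul, RingHom.id_apply]; exact integral_smul c _ }
    ⟨M * |b - a|, fun x => ?_⟩, fun x => rfl⟩
  calc ‖∫ r in a..b, A r x‖ ≤ M * ‖x‖ * |b - a| :=
        norm_integral_le_of_norm_le_const fun r hr => ((A r).le_opNorm x).trans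
          (mul_le_mul_of_nonneg_right (hM r (uIoc_subset_uIcc hr)) (norm_nonneg x))
    _ = M * |b - a| * ‖x‖ := by ring

theorem intervalIntegral_indicator_Ioi {φ : ℝ → E} {a b t : ℝ} (hat : a ≤ t) (htb : t ≤ b) :
    ∫ r in a..b, (Ioi t).indicator φ r = ∫ r in t..b, φ r := by
  rw [integral_of_le (hat.trans htb), integral_of_le htb, setIntegral_indicator measurableSet_Ioi,
    Ioc_inter_Ioi, max_eq_right hat]

theorem intervalIntegral_indicator_Iio {φ : ℝ → E} {a b t : ℝ} (hat : a ≤ t) (htb : t ≤ b) :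
    ∫ r in a..b, (Iio t).indicator φ r = ∫ r in a..t, φ r := by
  have hsection : Ioc a b ∩ Iio t = Ioo a t := by
    ext r
    simp only [mem_inter_iff, mem_Ioc, mem_Iio, mem_Ioo]
    constructor
    · rintro ⟨⟨har, -⟩, hrt⟩; exact ⟨har, hrt⟩
    · rintro ⟨har, hrt⟩; exact ⟨⟨har, hrt.le.trans htb⟩, hrt⟩
  rw [integral_of_le (hat.trans htb), integral_of_le hat, setIntegral_indicator measurableSet_Iio,
    hsection, integral_Ioc_eq_integral_Ioo]

theorem continuousOn_intervalIntegral_of_triangle {h : ℝ → ℝ → E} {a b C : ℝ}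
    (hC : ∀ t r, a ≤ t → t ≤ r → r ≤ b → ‖h t r‖ ≤ C)
    (hr : ∀ t ∈ Icc a b, ContinuousOn (h t) (Icc t b))
    (ht : ∀ r ∈ Icc a b, ContinuousOn (fun t => h t r) (Icc a r)) :
    ContinuousOn (fun t => ∫ r in t..b, h t r) (Icc a b) := by
  intro t₀ ht₀
  have hab : a ≤ b := ht₀.1.trans ht₀.2
  have hind : ∀ t ∈ Icc a b, ∫ r in t..b, h t r = ∫ r in a..b, (Ioi t).indicator (h t) r :=
    fun t ht => (intervalIntegral_indicator_Ioi ht.1 ht.2).symm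
  refine ContinuousWithinAt.congr ?_ hind (hind t₀ ht₀)
  refine continuousWithinAt_of_dominated_interval (bound := fun _ => C) ?_ ?_
    intervalIntegrable_const ?_
  · filter_upwards [self_mem_nhdsWithin] with t ht
    rw [aestronglyMeasurable_indicator_iff measurableSet_Ioi,
      Measure.restrict_restrict measurableSet_Ioi]
    refine ((hr t ht).aestronglyMeasurable measurableSet_Icc).mono_measure
      (Measure.restrict_mono ?_ le_rfl)
    rintro r ⟨hr₁, hr₂⟩
    rw [uIoc_of_le hab] at hr₂
    exact ⟨hr₁.le, hr₂.2⟩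
  · filter_upwards [self_mem_nhdsWithin] with t ht
    refine Eventually.of_forall fun r hr => ?_
    rw [uIoc_of_le hab] at hr
    by_cases htr : r ∈ Ioi t
    · rw [indicator_of_mem htr]; exact hC t r ht.1 htr.le hr.2
    · rw [indicator_of_notMem htr, norm_zero]
      exact (norm_nonneg _).trans (hC t t ht.1 le_rfl ht.2)
  · filter_upwards [compl_mem_ae_iff.2 (measure_singleton t₀)] with r hr₀ hr
    rw [uIoc_of_le hab] at hr
    rcases lt_or_gt_of_ne hr₀ with hlt | hgt
    · have hnot : ∀ t, r < t → (Ioi t).indicator (h t) r = 0 := fun t hrt =>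
        indicator_of_notMem (not_lt.2 hrt.le) _
      refine continuousWithinAt_const.congr_of_eventuallyEq ?_ (hnot t₀ hlt)
      filter_upwards [nhdsWithin_le_nhds (Ioi_mem_nhds hlt)] with t hrt
      exact hnot t hrt
    · have hon : ∀ t, t < r → (Ioi t).indicator (h t) r = h t r := fun t htr =>
        indicator_of_mem htr _
      have hcont : ContinuousWithinAt (fun t => h t r) (Icc a b) t₀ := by
        rw [← continuousWithinAt_inter (Iio_mem_nhds hgt)]
        exact (ht r ⟨hr.1.le, hr.2⟩ t₀ ⟨ht₀.1, hgt.le⟩).mono fun t hts => ⟨hts.1.1, hts.2.le⟩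
      refine hcont.congr_of_eventuallyEq ?_ (hon t₀ hgt)
      filter_upwards [nhdsWithin_le_nhds (Iio_mem_nhds hgt)] with t htr
      exact hon t htr

theorem intervalIntegral_swap_triangle {f : ℝ → ℝ → E} {a b : ℝ} (hab : a ≤ b)
    (hf : IntegrableOn (Function.uncurry f) {p : ℝ × ℝ | a < p.2 ∧ p.2 < p.1 ∧ p.1 ≤ b}) :
    ∫ r in a..b, ∫ q in a..r, f r q = ∫ q in a..b, ∫ r in q..b, f r q := by
  set g : ℝ → ℝ → E := fun r q => {p : ℝ × ℝ | p.2 < p.1}.indicator (Function.uncurry f) (r, q)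
  have hg : IntegrableOn (Function.uncurry g) (uIoc a b ×ˢ uIoc a b) := by
    refine (integrableOn_indicator_iff (measurableSet_lt measurable_snd measurable_fst)).2
      (hf.mono_set ?_)
    rintro ⟨r, q⟩ ⟨hqr, hr, hq⟩
    rw [uIoc_of_le hab] at hr hq
    exact ⟨hq.1, hqr, hr.2⟩
  have hrow : ∀ r ∈ uIcc a b, ∫ q in a..b, g r q = ∫ q in a..r, f r q := fun r hr => by
    rw [uIcc_of_le hab] at hr
    exact intervalIntegral_indicator_Iio (φ := f r) hr.1 hr.2
  have hcol : ∀ q ∈ uIcc a b, ∫ r in a..b, g r q = ∫ r in q..b, f r q := fun q hq => by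
    rw [uIcc_of_le hab] at hq
    exact intervalIntegral_indicator_Ioi (φ := fun r => f r q) hq.1 hq.2
  rw [← integral_congr hrow, ← integral_congr hcol]
  exact intervalIntegral_intervalIntegral_swap hg

end IntervalIntegral

/-- Gronwall's lemma, phrased through continuous majorants `c` because it is applied to
`φ = ‖D ·‖` for a merely strongly continuous `D`, which is not known to be measurable. -/
theorem eqOn_zero_of_le_mul_integral_majorant {φ : ℝ → ℝ} {a b K M : ℝ}
    (hφ₀ : ∀ t ∈ Icc a b, 0 ≤ φ t) (hφM : ∀ t ∈ Icc a b, φ t ≤ M)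
    (hφ : ∀ t ∈ Icc a b, ∀ c : ℝ → ℝ, Continuous c → (∀ r ∈ Icc t b, φ r ≤ c r) →
      φ t ≤ K * ∫ r in t..b, c r) :
    ∀ t ∈ Icc a b, φ t = 0 := by
  have hiter : ∀ n : ℕ, ∀ t ∈ Icc a b, φ t ≤ M * (K * (b - t)) ^ n / n.factorial := by
    intro n
    induction n with
    | zero => simpa using hφM
    | succ n ih =>
      intro t ht
      refine (hφ t ht _ (by fun_prop) fun r hr => ih r ⟨ht.1.trans hr.1, hr.2⟩).trans_eq ?_
      have hint : ∫ r in t..b, (b - r) ^ n = (b - t) ^ (n + 1) / (n + 1) := by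
        simp [integral_comp_sub_left (fun u => u ^ n) b]
      simp_rw [mul_pow, mul_div_assoc, intervalIntegral.integral_const_mul, div_eq_mul_inv,
        intervalIntegral.integral_mul_const, ← div_eq_mul_inv, hint, Nat.factorial_succ]
      push_cast
      field_simp
      ring
  intro t ht
  have hlim : Tendsto (fun n : ℕ => M * (K * (b - t)) ^ n / n.factorial) atTop (𝓝 0) := by
    simpa [mul_div_assoc] using
      (FloorSemiring.tendsto_pow_div_factorial_atTop (K * (b - t))).const_mul M
  exact le_antisymm (ge_of_tendsto' hlim fun n => hiter n t ht) (hφ₀ t ht)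

theorem volterra_homogeneous_eq_zero {E F : Type*} [NormedAddCommGroup E] [NormedSpace ℝ E]
    [NormedAddCommGroup F] [NormedSpace ℝ F]
    {A : ℝ → ℝ → F →L[ℝ] F} {B : ℝ → ℝ → E →L[ℝ] E} {D : ℝ → E →L[ℝ] F} {a b MA MB MD : ℝ}
    (hA : ∀ t r, a ≤ t → t ≤ r → r ≤ b → ‖A t r‖ ≤ MA)
    (hB : ∀ t r, a ≤ t → t ≤ r → r ≤ b → ‖B t r‖ ≤ MB)
    (hMD : ∀ t ∈ Icc a b, ‖D t‖ ≤ MD)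
    (heq : ∀ t ∈ Icc a b, ∀ x, D t x = -∫ r in t..b, A t r (D r (B t r x))) :
    ∀ t ∈ Icc a b, D t = 0 := by
  suffices ∀ t ∈ Icc a b, ‖D t‖ = 0 from fun t ht => norm_eq_zero.1 (this t ht)
  refine eqOn_zero_of_le_mul_integral_majorant (K := MA * MB) (fun t _ => norm_nonneg _) hMD ?_
  intro t ht c hc hDc
  have hMA : 0 ≤ MA := (norm_nonneg _).trans (hA t t ht.1 le_rfl ht.2)
  have hMB : 0 ≤ MB := (norm_nonneg _).trans (hB t t ht.1 le_rfl ht.2)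
  have hc₀ : ∀ r ∈ Icc t b, 0 ≤ c r := fun r hr => (norm_nonneg _).trans (hDc r hr)
  have hint₀ : 0 ≤ ∫ r in t..b, c r := integral_nonneg ht.2 hc₀
  refine (D t).opNorm_le_bound (by positivity) fun x => ?_
  have hbound : ∀ r ∈ Icc t b, ‖A t r (D r (B t r x))‖ ≤ MA * MB * ‖x‖ * c r := fun r hr =>
    calc ‖A t r (D r (B t r x))‖ ≤ MA * (c r * (MB * ‖x‖)) :=
          (A t r).le_of_opNorm_le_of_le (hA t r ht.1 hr.1 hr.2)
            ((D r).le_of_opNorm_le_of_le (hDc r hr)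
              ((B t r).le_of_opNorm_le (hB t r ht.1 hr.1 hr.2) x))
      _ = MA * MB * ‖x‖ * c r := by ring
  calc ‖D t x‖ = ‖∫ r in t..b, A t r (D r (B t r x))‖ := by rw [heq t ht x, norm_neg]
    _ ≤ ∫ r in t..b, MA * MB * ‖x‖ * c r :=
        norm_integral_le_of_norm_le ht.2
          (Eventually.of_forall fun r hr => hbound r (Ioc_subset_Icc_self hr))
          ((hc.const_mul _).intervalIntegrable _ _)
    _ = MA * MB * (∫ r in t..b, c r) * ‖x‖ := by rw [intervalIntegral.integral_const_mul]; ring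

section Propagators

variable {E : Type*} [NormedAddCommGroup E] [NormedSpace ℝ E]

structure IsForwardPropagator (U : ℝ → ℝ → E →L[ℝ] E) (T : ℝ) : Prop where
  comp : ∀ s r t, 0 ≤ s → s ≤ r → r ≤ t → t ≤ T → U t s = (U t r).comp (U r s)
  bounded : ∃ M, ∀ s t, 0 ≤ s → s ≤ t → t ≤ T → ‖U t s‖ ≤ M
  continuousOn_fst : ∀ x, ∀ s ∈ Icc 0 T, ContinuousOn (fun t => U t s x) (Icc s T)
  continuousOn_snd : ∀ x, ∀ t ∈ Icc 0 T, ContinuousOn (fun s => U t s x) (Icc 0 t)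

structure IsBackwardPropagator (U : ℝ → ℝ → E →L[ℝ] E) (T : ℝ) : Prop where
  comp : ∀ t r s, 0 ≤ t → t ≤ r → r ≤ s → s ≤ T → U t s = (U t r).comp (U r s)
  bounded : ∃ M, ∀ t s, 0 ≤ t → t ≤ s → s ≤ T → ‖U t s‖ ≤ M
  continuousOn_fst : ∀ x, ∀ s ∈ Icc 0 T, ContinuousOn (fun t => U t s x) (Icc 0 s)
  continuousOn_snd : ∀ x, ∀ t ∈ Icc 0 T, ContinuousOn (fun s => U t s x) (Icc t T)

variable {U : ℝ → ℝ → E →L[ℝ] E} {T : ℝ} {I : Set ℝ} {w : ℝ → E}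

namespace IsForwardPropagator

theorem continuousOn_snd_apply (hU : IsForwardPropagator U T) {t : ℝ} (ht : t ∈ Icc 0 T)
    (hI : I ⊆ Icc 0 t) (hw : ContinuousOn w I) : ContinuousOn (fun s => U t s (w s)) I :=
  let ⟨_, hM⟩ := hU.bounded
  hw.clm_apply_of_norm_le (fun x => (hU.continuousOn_snd x t ht).mono hI)
    fun s hs => hM s t (hI hs).1 (hI hs).2 ht.2

/-- Off the diagonal, `U r q = U r m ∘ U m q` for a fixed `m` strictly between `q` and `r`,
which turns separate strong continuity into joint continuity. -/
theorem continuousOn_apply_offDiag (hU : IsForwardPropagator U T) {a : ℝ} (ha : 0 ≤ a)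
    (hw : ContinuousOn w (Icc a T)) :
    ContinuousOn (fun p : ℝ × ℝ => U p.1 p.2 (w p.2)) {p | a ≤ p.2 ∧ p.2 < p.1 ∧ p.1 ≤ T} := by
  rintro p₀ ⟨hq₀, hqr₀, hr₀⟩
  obtain ⟨M, hM⟩ := hU.bounded
  obtain ⟨m, hm₁, hm₂⟩ := exists_between hqr₀
  have hm : m ∈ Icc 0 T := ⟨ha.trans (hq₀.trans hm₁.le), hm₂.le.trans hr₀⟩
  have hV : {p : ℝ × ℝ | p.2 < m ∧ m < p.1} ∈ 𝓝 p₀ :=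
    ((isOpen_lt continuous_snd continuous_const).inter
      (isOpen_lt continuous_const continuous_fst)).mem_nhds ⟨hm₁, hm₂⟩
  have hinner : ContinuousOn (fun q => U m q (w q)) (Icc a m) :=
    hU.continuousOn_snd_apply hm (Icc_subset_Icc_left ha) (hw.mono (Icc_subset_Icc_right hm.2))
  have hsplit : ContinuousOn (fun p : ℝ × ℝ => U p.1 m (U m p.2 (w p.2)))
      (Icc m T ×ˢ Icc a m) :=
    (hinner.comp continuous_snd.continuousOn fun p hp => hp.2).clm_apply_of_norm_le
      (fun y => (hU.continuousOn_fst y m hm).comp continuous_fst.continuousOn fun p hp => hp.1)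
      fun p hp => hM m p.1 hm.1 hp.1.1 hp.1.2
  rw [← continuousWithinAt_inter hV]
  refine ((hsplit p₀ ⟨⟨hm₂.le, hr₀⟩, hq₀, hm₁.le⟩).mono ?_).congr ?_ ?_
  · rintro p ⟨⟨hq, -, hr⟩, hqm, hmr⟩
    exact ⟨⟨hmr.le, hr⟩, hq, hqm.le⟩
  · rintro p ⟨⟨hq, -, hr⟩, hqm, hmr⟩
    rw [hU.comp p.2 m p.1 (ha.trans hq) hqm.le hmr.le hr, ContinuousLinearMap.comp_apply]
  · rw [hU.comp p₀.2 m p₀.1 (ha.trans hq₀) hm₁.le hm₂.le hr₀, ContinuousLinearMap.comp_apply]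

end IsForwardPropagator

namespace IsBackwardPropagator

theorem continuousOn_fst_apply (hU : IsBackwardPropagator U T) {s : ℝ} (hs : s ∈ Icc 0 T)
    (hI : I ⊆ Icc 0 s) (hw : ContinuousOn w I) : ContinuousOn (fun t => U t s (w t)) I :=
  let ⟨_, hM⟩ := hU.bounded
  hw.clm_apply_of_norm_le (fun x => (hU.continuousOn_fst x s hs).mono hI)
    fun t ht => hM t s (hI ht).1 (hI ht).2 hs.2

theorem continuousOn_snd_apply (hU : IsBackwardPropagator U T) {t : ℝ} (ht : t ∈ Icc 0 T)
    (hI : I ⊆ Icc t T) (hw : ContinuousOn w I) : ContinuousOn (fun s => U t s (w s)) I :=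
  let ⟨_, hM⟩ := hU.bounded
  hw.clm_apply_of_norm_le (fun x => (hU.continuousOn_snd x t ht).mono hI)
    fun s hs => hM t s ht.1 (hI hs).1 (hI hs).2

end IsBackwardPropagator

end Propagators

section Representation

variable {X₁ X₂ : Type*} [NormedAddCommGroup X₁] [NormedSpace ℝ X₁]
  [NormedAddCommGroup X₂] [NormedSpace ℝ X₂] {T : ℝ} {Ub : ℝ → ℝ → X₂ →L[ℝ] X₂}
  {Ωl : ℝ → ℝ → X₁ →L[ℝ] X₁} {Q12 : ℝ → X₁ →L[ℝ] X₂}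

theorem continuousOn_kernel_apply [CompleteSpace X₁] (hUb : IsBackwardPropagator Ub T)
    (hΩl : IsForwardPropagator Ωl T) (hQ12 : ∀ x, ContinuousOn (fun t => Q12 t x) (Icc 0 T))
    {t q : ℝ} (ht : t ∈ Icc 0 T) (hq : q ∈ Icc t T) (x : X₁) :
    ContinuousOn (fun r => Ub t r (Q12 r (Ωl r q x))) (Icc q T) :=
  hUb.continuousOn_snd_apply ht (Icc_subset_Icc_left hq.1) <| isCompact_Icc.continuousOn_clm_apply
    (fun y => (hQ12 y).mono (Icc_subset_Icc_left (ht.1.trans hq.1)))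
    (hΩl.continuousOn_fst x q ⟨ht.1.trans hq.1, hq.2⟩)

theorem exists_bound_kernel_apply [CompleteSpace X₁] (hUb : IsBackwardPropagator Ub T)
    (hΩl : IsForwardPropagator Ωl T) (hQ12 : ∀ x, ContinuousOn (fun t => Q12 t x) (Icc 0 T))
    {t : ℝ} (ht : 0 ≤ t) {y : ℝ → X₁} (hy : ContinuousOn y (Icc t T)) :
    ∃ C, ∀ q r, t ≤ q → q ≤ r → r ≤ T → ‖Ub t r (Q12 r (Ωl r q (y q)))‖ ≤ C := by
  obtain ⟨MU, hMU⟩ := hUb.bounded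
  obtain ⟨MΩ, hMΩ⟩ := hΩl.bounded
  obtain ⟨M12, hM12⟩ := isCompact_Icc.exists_norm_le_of_continuousOn_apply hQ12
  obtain ⟨My, hMy⟩ := isCompact_Icc.exists_bound_of_continuousOn hy
  refine ⟨MU * (M12 * (MΩ * My)), fun q r htq hqr hrT => ?_⟩
  exact (Ub t r).le_of_opNorm_le_of_le (hMU t r ht (htq.trans hqr) hrT)
    ((Q12 r).le_of_opNorm_le_of_le (hM12 r ⟨ht.trans (htq.trans hqr), hrT⟩)
      ((Ωl r q).le_of_opNorm_le_of_le (hMΩ q r (ht.trans htq) hqr hrT)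
        (hMy q ⟨htq, hqr.trans hrT⟩)))

theorem integrableOn_kernel_apply [CompleteSpace X₁] (hUb : IsBackwardPropagator Ub T)
    (hΩl : IsForwardPropagator Ωl T) (hQ12 : ∀ x, ContinuousOn (fun t => Q12 t x) (Icc 0 T))
    {t : ℝ} (ht : t ∈ Icc 0 T) {y : ℝ → X₁} (hy : ContinuousOn y (Icc t T)) :
    IntegrableOn (fun p : ℝ × ℝ => Ub t p.1 (Q12 p.1 (Ωl p.1 p.2 (y p.2))))
      {p | t < p.2 ∧ p.2 < p.1 ∧ p.1 ≤ T} := by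
  set S := {p : ℝ × ℝ | t ≤ p.2 ∧ p.2 < p.1 ∧ p.1 ≤ T}
  have hS : MeasurableSet S := (measurableSet_le measurable_const measurable_snd).inter
    ((measurableSet_lt measurable_snd measurable_fst).inter
      (measurableSet_le measurable_fst measurable_const))
  have hfst : MapsTo Prod.fst S (Icc t T) := fun p hp => ⟨hp.1.trans hp.2.1.le, hp.2.2⟩
  have hfin : volume S < ⊤ :=
    (measure_mono (t := Icc t T ×ˢ Icc t T) fun p hp =>
      ⟨hfst hp, hp.1, hp.2.1.le.trans hp.2.2⟩).trans_lt
      ((isCompact_Icc.prod isCompact_Icc).measure_lt_top (μ := volume))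
  obtain ⟨MU, hMU⟩ := hUb.bounded
  obtain ⟨M12, hM12⟩ := isCompact_Icc.exists_norm_le_of_continuousOn_apply hQ12
  obtain ⟨C, hC⟩ := exists_bound_kernel_apply hUb hΩl hQ12 ht.1 hy
  have hcont : ContinuousOn (fun p : ℝ × ℝ => Ub t p.1 (Q12 p.1 (Ωl p.1 p.2 (y p.2)))) S :=
    ((hΩl.continuousOn_apply_offDiag ht.1 hy).clm_apply_of_norm_le
      (fun x => ((hQ12 x).mono (Icc_subset_Icc_left ht.1)).comp continuous_fst.continuousOn hfst)
      fun p hp => hM12 p.1 (Icc_subset_Icc_left ht.1 (hfst hp))).clm_apply_of_norm_le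
      (fun x => (hUb.continuousOn_snd x t ht).comp continuous_fst.continuousOn hfst)
      fun p hp => hMU t p.1 ht.1 (hfst hp).1 (hfst hp).2
  refine (IntegrableOn.of_bound hfin (hcont.aestronglyMeasurable hS) C ((ae_restrict_iff' hS).2
    (Eventually.of_forall fun p hp => hC p.2 p.1 hp.1 hp.2.1.le hp.2.2))).mono_set ?_
  exact fun p hp => ⟨hp.1.le, hp.2⟩

theorem exists_clm_representation [CompleteSpace X₁] (hUb : IsBackwardPropagator Ub T)
    (hΩl : IsForwardPropagator Ωl T) (hQ12 : ∀ x, ContinuousOn (fun t => Q12 t x) (Icc 0 T))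
    (G : X₁ →L[ℝ] X₂) :
    ∃ P : ℝ → X₁ →L[ℝ] X₂, ∀ t ∈ Icc 0 T, ∀ x,
      P t x = Ub t T (G (Ωl T t x)) + ∫ r in t..T, Ub t r (Q12 r (Ωl r t x)) := by
  have hL : ∀ t ∈ Icc 0 T, ∃ L : X₁ →L[ℝ] X₂, ∀ x,
      L x = ∫ r in t..T, Ub t r (Q12 r (Ωl r t x)) := fun t ht =>
    exists_clm_intervalIntegral_apply (A := fun r => (Ub t r).comp ((Q12 r).comp (Ωl r t)))
      fun x => by
        rw [uIcc_of_le ht.2]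
        exact continuousOn_kernel_apply hUb hΩl hQ12 ht ⟨le_rfl, ht.2⟩ x
  choose! L hL using hL
  exact ⟨fun t => (Ub t T).comp (G.comp (Ωl T t)) + L t, fun t ht x => by simp [hL t ht]⟩

theorem continuousOn_representation [CompleteSpace X₁] (hT : 0 ≤ T)
    (hUb : IsBackwardPropagator Ub T) (hΩl : IsForwardPropagator Ωl T)
    (hQ12 : ∀ x, ContinuousOn (fun t => Q12 t x) (Icc 0 T)) (G : X₁ →L[ℝ] X₂) (x : X₁) :
    ContinuousOn (fun t => Ub t T (G (Ωl T t x)) + ∫ r in t..T, Ub t r (Q12 r (Ωl r t x)))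
      (Icc 0 T) := by
  obtain ⟨MU, hMU⟩ := hUb.bounded
  obtain ⟨MΩ, hMΩ⟩ := hΩl.bounded
  obtain ⟨M12, hM12⟩ := isCompact_Icc.exists_norm_le_of_continuousOn_apply hQ12
  have hT' : T ∈ Icc 0 T := ⟨hT, le_rfl⟩
  refine ContinuousOn.add ?_ (continuousOn_intervalIntegral_of_triangle
    (C := MU * (M12 * (MΩ * ‖x‖))) ?_ ?_ ?_)
  · exact hUb.continuousOn_fst_apply hT' subset_rfl
      (G.continuous.comp_continuousOn (hΩl.continuousOn_snd x T hT'))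
  · intro t r h0t htr hrT
    exact (Ub t r).le_of_opNorm_le_of_le (hMU t r h0t htr hrT)
      ((Q12 r).le_of_opNorm_le_of_le (hM12 r ⟨h0t.trans htr, hrT⟩)
        ((Ωl r t).le_of_opNorm_le (hMΩ t r h0t htr hrT) x))
  · exact fun t ht => continuousOn_kernel_apply hUb hΩl hQ12 ht ⟨le_rfl, ht.2⟩ x
  · intro r hr
    exact hUb.continuousOn_fst_apply hr subset_rfl
      ((Q12 r).continuous.comp_continuousOn (hΩl.continuousOn_snd x r hr))

theorem integral_backward_apply_representation [CompleteSpace X₁] [CompleteSpace X₂]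
    (hUb : IsBackwardPropagator Ub T) (hΩl : IsForwardPropagator Ωl T)
    (hQ12 : ∀ x, ContinuousOn (fun t => Q12 t x) (Icc 0 T)) (G : X₁ →L[ℝ] X₂)
    {P : ℝ → X₁ →L[ℝ] X₂} (hP : ∀ t ∈ Icc 0 T, ∀ x,
      P t x = Ub t T (G (Ωl T t x)) + ∫ r in t..T, Ub t r (Q12 r (Ωl r t x)))
    {t : ℝ} (ht : t ∈ Icc 0 T) {y : ℝ → X₁} (hy : ContinuousOn y (Icc t T)) :
    ∫ q in t..T, Ub t q (P q (y q)) =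
      Ub t T (G (∫ q in t..T, Ωl T q (y q))) +
        ∫ r in t..T, Ub t r (Q12 r (∫ q in t..r, Ωl r q (y q))) := by
  have hsub : ∀ {q}, q ∈ Icc t T → q ∈ Icc 0 T := fun hq => ⟨ht.1.trans hq.1, hq.2⟩
  have hΩy : ∀ r ∈ Icc t T, ContinuousOn (fun q => Ωl r q (y q)) (Icc t r) := fun r hr =>
    hΩl.continuousOn_snd_apply (hsub hr) (Icc_subset_Icc_left ht.1)
      (hy.mono (Icc_subset_Icc_right hr.2))
  obtain ⟨C, hC⟩ := exists_bound_kernel_apply hUb hΩl hQ12 ht.1 hy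
  have hinner : ContinuousOn (fun q => ∫ r in q..T, Ub t r (Q12 r (Ωl r q (y q)))) (Icc t T) :=
    continuousOn_intervalIntegral_of_triangle (h := fun q r => Ub t r (Q12 r (Ωl r q (y q))))
      hC (fun q hq => continuousOn_kernel_apply hUb hΩl hQ12 ht hq (y q))
      fun r hr => ((Ub t r).comp (Q12 r)).continuous.comp_continuousOn (hΩy r hr)
  have hsplit : ∀ q ∈ uIcc t T, Ub t q (P q (y q)) =
      Ub t T (G (Ωl T q (y q))) + ∫ r in q..T, Ub t r (Q12 r (Ωl r q (y q))) := by
    intro q hq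
    rw [uIcc_of_le ht.2] at hq
    rw [hP q (hsub hq), map_add, ← (Ub t q).intervalIntegral_comp_comm
      ((continuousOn_kernel_apply hUb hΩl hQ12 (hsub hq) ⟨le_rfl, hq.2⟩ _).intervalIntegrable_of_Icc
        hq.2)]
    congr 1
    · rw [hUb.comp t q T ht.1 hq.1 hq.2 le_rfl, ContinuousLinearMap.comp_apply]
    · refine integral_congr fun r hr => ?_
      rw [uIcc_of_le hq.2] at hr
      simp only [hUb.comp t q r ht.1 hq.1 hr.1 hr.2, ContinuousLinearMap.comp_apply]
  have hΩyT := hΩy T ⟨ht.2, le_rfl⟩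
  have hfirst : IntervalIntegrable (fun q => Ub t T (G (Ωl T q (y q)))) volume t T :=
    (((Ub t T).comp G).continuous.comp_continuousOn hΩyT).intervalIntegrable_of_Icc ht.2
  rw [integral_congr hsplit, integral_add hfirst (hinner.intervalIntegrable_of_Icc ht.2),
    ← intervalIntegral_swap_triangle (f := fun r q => Ub t r (Q12 r (Ωl r q (y q)))) ht.2
      (integrableOn_kernel_apply hUb hΩl hQ12 ht hy)]
  congr 1
  · exact ((Ub t T).comp G).intervalIntegral_comp_comm (hΩyT.intervalIntegrable_of_Icc ht.2)
  · refine integral_congr fun r hr => ?_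
    rw [uIcc_of_le ht.2] at hr
    exact ((Ub t r).comp (Q12 r)).intervalIntegral_comp_comm
      ((hΩy r hr).intervalIntegrable_of_Icc hr.1)

theorem representation_solves_linear_equation [CompleteSpace X₁] [CompleteSpace X₂]
    (hUb : IsBackwardPropagator Ub T) (hΩl : IsForwardPropagator Ωl T)
    (hQ12 : ∀ x, ContinuousOn (fun t => Q12 t x) (Icc 0 T)) (G : X₁ →L[ℝ] X₂)
    {Ul : ℝ → ℝ → X₁ →L[ℝ] X₁}
    (hUl : ∀ x, ∀ s ∈ Icc 0 T, ContinuousOn (fun t => Ul t s x) (Icc s T))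
    {Q1 : ℝ → X₁ →L[ℝ] X₁} (hQ1 : ∀ x, ContinuousOn (fun t => Q1 t x) (Icc 0 T))
    (hΩleq : ∀ x, ∀ s t, 0 ≤ s → s ≤ t → t ≤ T →
      Ωl t s x = Ul t s x - ∫ r in s..t, Ωl t r (Q1 r (Ul r s x)))
    {P : ℝ → X₁ →L[ℝ] X₂} (hPc : ∀ x, ContinuousOn (fun t => P t x) (Icc 0 T))
    (hP : ∀ t ∈ Icc 0 T, ∀ x,
      P t x = Ub t T (G (Ωl T t x)) + ∫ r in t..T, Ub t r (Q12 r (Ωl r t x)))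
    {t : ℝ} (ht : t ∈ Icc 0 T) (x : X₁) :
    P t x = Ub t T (G (Ul T t x)) +
      ∫ r in t..T, Ub t r (Q12 r (Ul r t x) - P r (Q1 r (Ul r t x))) := by
  set z := fun s => Ul s t x
  set y := fun q => Q1 q (z q)
  set V := fun s => ∫ q in t..s, Ωl s q (y q)
  have hsub : Icc t T ⊆ Icc 0 T := Icc_subset_Icc_left ht.1
  have hz : ContinuousOn z (Icc t T) := hUl x t ht
  have hy : ContinuousOn y (Icc t T) :=
    isCompact_Icc.continuousOn_clm_apply (fun x => (hQ1 x).mono hsub) hz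
  have hΩ : ∀ s ∈ Icc t T, Ωl s t x = z s - V s := fun s hs => hΩleq x t s ht.1 hs.1 hs.2
  have hV : ContinuousOn V (Icc t T) :=
    (hz.sub (hΩl.continuousOn_fst x t ht)).congr fun s hs => by
      simp only [Pi.sub_apply, hΩ s hs, sub_sub_cancel]
  have hkernel : ∀ {w : ℝ → X₁}, ContinuousOn w (Icc t T) →
      IntervalIntegrable (fun r => Ub t r (Q12 r (w r))) volume t T := fun hw =>
    (hUb.continuousOn_snd_apply ht subset_rfl <| isCompact_Icc.continuousOn_clm_apply
      (fun x => (hQ12 x).mono hsub) hw).intervalIntegrable_of_Icc ht.2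
  have hPy : IntervalIntegrable (fun r => Ub t r (P r (y r))) volume t T :=
    (hUb.continuousOn_snd_apply ht subset_rfl <| isCompact_Icc.continuousOn_clm_apply
      (fun x => (hPc x).mono hsub) hy).intervalIntegrable_of_Icc ht.2
  calc P t x = Ub t T (G (z T - V T)) + ∫ r in t..T, Ub t r (Q12 r (z r - V r)) := by
        rw [hP t ht x, hΩ T ⟨ht.2, le_rfl⟩]
        congr 1
        refine integral_congr fun r hr => ?_
        rw [uIcc_of_le ht.2] at hr
        rw [hΩ r hr]
    _ = (Ub t T (G (z T)) + ∫ r in t..T, Ub t r (Q12 r (z r))) -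
          (Ub t T (G (V T)) + ∫ r in t..T, Ub t r (Q12 r (V r))) := by
        simp only [map_sub]
        rw [integral_sub (hkernel hz) (hkernel hV)]
        abel
    _ = (Ub t T (G (z T)) + ∫ r in t..T, Ub t r (Q12 r (z r))) -
          ∫ r in t..T, Ub t r (P r (y r)) := by
        rw [integral_backward_apply_representation hUb hΩl hQ12 G hP ht hy]
    _ = Ub t T (G (z T)) + ∫ r in t..T, Ub t r (Q12 r (z r) - P r (y r)) := by
        rw [add_sub_assoc, ← integral_sub (hkernel hz) hPy]
        simp only [map_sub]

theorem linear_equation_solution_unique [CompleteSpace X₁] (hUb : IsBackwardPropagator Ub T)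
    (hQ12 : ∀ x, ContinuousOn (fun t => Q12 t x) (Icc 0 T)) (G : X₁ →L[ℝ] X₂)
    {Ul : ℝ → ℝ → X₁ →L[ℝ] X₁} {MUl : ℝ}
    (hUlbdd : ∀ s t, 0 ≤ s → s ≤ t → t ≤ T → ‖Ul t s‖ ≤ MUl)
    (hUl : ∀ x, ∀ s ∈ Icc 0 T, ContinuousOn (fun t => Ul t s x) (Icc s T))
    {Q1 : ℝ → X₁ →L[ℝ] X₁} (hQ1 : ∀ x, ContinuousOn (fun t => Q1 t x) (Icc 0 T))
    {P Q : ℝ → X₁ →L[ℝ] X₂}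
    (hPc : ∀ x, ContinuousOn (fun t => P t x) (Icc 0 T))
    (hQc : ∀ x, ContinuousOn (fun t => Q t x) (Icc 0 T))
    (hP : ∀ t ∈ Icc 0 T, ∀ x, P t x = Ub t T (G (Ul T t x)) +
      ∫ r in t..T, Ub t r (Q12 r (Ul r t x) - P r (Q1 r (Ul r t x))))
    (hQ : ∀ t ∈ Icc 0 T, ∀ x, Q t x = Ub t T (G (Ul T t x)) +
      ∫ r in t..T, Ub t r (Q12 r (Ul r t x) - Q r (Q1 r (Ul r t x)))) :
    ∀ t ∈ Icc 0 T, P t = Q t := by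
  obtain ⟨MU, hMU⟩ := hUb.bounded
  obtain ⟨M1, hM1⟩ := isCompact_Icc.exists_norm_le_of_continuousOn_apply hQ1
  obtain ⟨MD, hMD⟩ := isCompact_Icc.exists_norm_le_of_continuousOn_apply (A := fun t => P t - Q t)
    fun x => (hPc x).sub (hQc x)
  have hB : ∀ t r, 0 ≤ t → t ≤ r → r ≤ T → ‖(Q1 r).comp (Ul r t)‖ ≤ M1 * MUl :=
    fun t r h0t htr hrT => (ContinuousLinearMap.opNorm_comp_le _ _).trans <|
      mul_le_mul (hM1 r ⟨h0t.trans htr, hrT⟩) (hUlbdd t r h0t htr hrT) (norm_nonneg _)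
        ((norm_nonneg _).trans (hM1 r ⟨h0t.trans htr, hrT⟩))
  have hint : ∀ R : ℝ → X₁ →L[ℝ] X₂, (∀ x, ContinuousOn (fun t => R t x) (Icc 0 T)) →
      ∀ t ∈ Icc 0 T, ∀ x, IntervalIntegrable
        (fun r => Ub t r (Q12 r (Ul r t x) - R r (Q1 r (Ul r t x)))) volume t T := by
    intro R hR t ht x
    have hsub : Icc t T ⊆ Icc 0 T := Icc_subset_Icc_left ht.1
    have hy := isCompact_Icc.continuousOn_clm_apply (fun x => (hQ1 x).mono hsub) (hUl x t ht)
    refine (hUb.continuousOn_snd_apply ht subset_rfl ?_).intervalIntegrable_of_Icc ht.2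
    exact (isCompact_Icc.continuousOn_clm_apply (fun x => (hQ12 x).mono hsub) (hUl x t ht)).sub
      (isCompact_Icc.continuousOn_clm_apply (fun x => (hR x).mono hsub) hy)
  have hzero := volterra_homogeneous_eq_zero (A := Ub) (D := fun t => P t - Q t) hMU hB hMD
    fun t ht x => by
      simp only [sub_apply, ContinuousLinearMap.comp_apply]
      rw [hP t ht x, hQ t ht x, add_sub_add_left_eq_sub,
        ← integral_sub (hint P hPc t ht x) (hint Q hQc t ht x), ← intervalIntegral.integral_neg]
      refine integral_congr fun r _ => ?_
      simp only [map_sub]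
      abel
  exact fun t ht => sub_eq_zero.1 (hzero t ht)

end Representation

theorem linear_integral_equation_unique_solution_left_general
    {X₁ X₂ : Type*}
    [NormedAddCommGroup X₁] [NormedSpace ℝ X₁] [CompleteSpace X₁]
    [NormedAddCommGroup X₂] [NormedSpace ℝ X₂] [CompleteSpace X₂]
    (T : ℝ) (hT : 0 ≤ T)
    -- forward evolution family in L(X₁): strongly continuous, uniformly bounded
    (Ul : ℝ → ℝ → X₁ →L[ℝ] X₁)
    (MUl : ℝ) (hUlbdd : ∀ s t : ℝ, 0 ≤ s → s ≤ t → t ≤ T → ‖Ul t s‖ ≤ MUl)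
    (hUlsc₁ : ∀ x : X₁, ∀ s ∈ Set.Icc 0 T, ContinuousOn (fun t => Ul t s x) (Set.Icc s T))
    -- backward evolution family in L(X₂): strongly continuous, uniformly bounded
    (Ub : ℝ → ℝ → X₂ →L[ℝ] X₂)
    (hUbcomp : ∀ t r s : ℝ, 0 ≤ t → t ≤ r → r ≤ s → s ≤ T →
      Ub t s = (Ub t r).comp (Ub r s))
    (MUb : ℝ) (hUbbdd : ∀ t s : ℝ, 0 ≤ t → t ≤ s → s ≤ T → ‖Ub t s‖ ≤ MUb)
    (hUbsc₁ : ∀ y : X₂, ∀ s ∈ Set.Icc 0 T, ContinuousOn (fun t => Ub t s y) (Set.Icc 0 s))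
    (hUbsc₂ : ∀ y : X₂, ∀ t ∈ Set.Icc 0 T, ContinuousOn (fun s => Ub t s y) (Set.Icc t T))
    -- strongly continuous coefficients
    (Q12 : ℝ → X₁ →L[ℝ] X₂)
    (hQ12sc : ∀ x : X₁, ContinuousOn (fun t => Q12 t x) (Set.Icc 0 T))
    (Q1 : ℝ → X₁ →L[ℝ] X₁)
    (hQ1sc : ∀ x : X₁, ContinuousOn (fun t => Q1 t x) (Set.Icc 0 T))
    -- the perturbed forward evolution family Ω⃖
    (Ωl : ℝ → ℝ → X₁ →L[ℝ] X₁)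
    (hΩlcomp : ∀ s r t : ℝ, 0 ≤ s → s ≤ r → r ≤ t → t ≤ T →
      Ωl t s = (Ωl t r).comp (Ωl r s))
    (MΩl : ℝ) (hΩlbdd : ∀ s t : ℝ, 0 ≤ s → s ≤ t → t ≤ T → ‖Ωl t s‖ ≤ MΩl)
    (hΩlsc₁ : ∀ x : X₁, ∀ s ∈ Set.Icc 0 T, ContinuousOn (fun t => Ωl t s x) (Set.Icc s T))
    (hΩlsc₂ : ∀ x : X₁, ∀ t ∈ Set.Icc 0 T, ContinuousOn (fun s => Ωl t s x) (Set.Icc 0 t))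
    (hΩleq : ∀ x : X₁, ∀ s t : ℝ, 0 ≤ s → s ≤ t → t ≤ T →
      Ωl t s x = Ul t s x - ∫ r in s..t, Ωl t r (Q1 r (Ul r s x)))
    (G : X₁ →L[ℝ] X₂) :
    ∃ P : ℝ → X₁ →L[ℝ] X₂,
      (∀ x : X₁, ContinuousOn (fun t => P t x) (Set.Icc 0 T)) ∧
      -- P is given by the representation formula
      (∀ t ∈ Set.Icc 0 T, ∀ x : X₁,
        P t x = Ub t T (G (Ωl T t x)) + ∫ r in t..T, Ub t r (Q12 r (Ωl r t x))) ∧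
      -- P solves the linear integral equation
      (∀ t ∈ Set.Icc 0 T, ∀ x : X₁,
        P t x = Ub t T (G (Ul T t x)) +
          ∫ r in t..T, Ub t r (Q12 r (Ul r t x) - P r (Q1 r (Ul r t x)))) ∧
      -- and it is the unique strongly continuous solution
      (∀ Q : ℝ → X₁ →L[ℝ] X₂,
        (∀ x : X₁, ContinuousOn (fun t => Q t x) (Set.Icc 0 T)) →
        (∀ t ∈ Set.Icc 0 T, ∀ x : X₁,
          Q t x = Ub t T (G (Ul T t x)) +
            ∫ r in t..T, Ub t r (Q12 r (Ul r t x) - Q r (Q1 r (Ul r t x)))) →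
        ∀ t ∈ Set.Icc 0 T, Q t = P t) := by
  have hUb : IsBackwardPropagator Ub T := ⟨hUbcomp, ⟨MUb, hUbbdd⟩, hUbsc₁, hUbsc₂⟩
  have hΩl : IsForwardPropagator Ωl T := ⟨hΩlcomp, ⟨MΩl, hΩlbdd⟩, hΩlsc₁, hΩlsc₂⟩
  obtain ⟨P, hP⟩ := exists_clm_representation hUb hΩl hQ12sc G
  have hPc : ∀ x, ContinuousOn (fun t => P t x) (Icc 0 T) := fun x =>
    (continuousOn_representation hT hUb hΩl hQ12sc G x).congr fun t ht => hP t ht x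
  have hPeq : ∀ t ∈ Icc 0 T, ∀ x, P t x = Ub t T (G (Ul T t x)) +
      ∫ r in t..T, Ub t r (Q12 r (Ul r t x) - P r (Q1 r (Ul r t x))) := fun t ht x =>
    representation_solves_linear_equation hUb hΩl hQ12sc G hUlsc₁ hQ1sc hΩleq hPc hP ht x
  exact ⟨P, hPc, hP, hPeq, fun Q hQc hQeq =>
    linear_equation_solution_unique hUb hQ12sc G hUlbdd hUlsc₁ hQ1sc hQc hPc hQeq hPeq⟩

/-- representation of the unique strongly continuous solution of the
linear integral equation `P(t) = U⃗_{t,T} G U⃖_{T,t} + ∫_t^T U⃗_{t,r}[Q₁₂(r) − P(r)Q₁(r)]U⃖_{r,t} dr`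
via the perturbed forward family `Ω⃖`. -/
theorem linear_integral_equation_unique_solution_left
    {X₁ X₂ : Type*}
    [NormedAddCommGroup X₁] [NormedSpace ℝ X₁] [CompleteSpace X₁]
    [NormedAddCommGroup X₂] [NormedSpace ℝ X₂] [CompleteSpace X₂]
    (T : ℝ) (hT : 0 ≤ T)
    -- forward evolution family in L(X₁): strongly continuous, uniformly bounded
    (Ul : ℝ → ℝ → X₁ →L[ℝ] X₁)
    (hUlid : ∀ s ∈ Set.Icc 0 T, Ul s s = ContinuousLinearMap.id ℝ X₁)
    (hUlcomp : ∀ s r t : ℝ, 0 ≤ s → s ≤ r → r ≤ t → t ≤ T →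
      Ul t s = (Ul t r).comp (Ul r s))
    (MUl : ℝ) (hUlbdd : ∀ s t : ℝ, 0 ≤ s → s ≤ t → t ≤ T → ‖Ul t s‖ ≤ MUl)
    (hUlsc₁ : ∀ x : X₁, ∀ s ∈ Set.Icc 0 T, ContinuousOn (fun t => Ul t s x) (Set.Icc s T))
    (hUlsc₂ : ∀ x : X₁, ∀ t ∈ Set.Icc 0 T, ContinuousOn (fun s => Ul t s x) (Set.Icc 0 t))
    -- backward evolution family in L(X₂): strongly continuous, uniformly bounded
    (Ub : ℝ → ℝ → X₂ →L[ℝ] X₂)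
    (hUbid : ∀ s ∈ Set.Icc 0 T, Ub s s = ContinuousLinearMap.id ℝ X₂)
    (hUbcomp : ∀ t r s : ℝ, 0 ≤ t → t ≤ r → r ≤ s → s ≤ T →
      Ub t s = (Ub t r).comp (Ub r s))
    (MUb : ℝ) (hUbbdd : ∀ t s : ℝ, 0 ≤ t → t ≤ s → s ≤ T → ‖Ub t s‖ ≤ MUb)
    (hUbsc₁ : ∀ y : X₂, ∀ s ∈ Set.Icc 0 T, ContinuousOn (fun t => Ub t s y) (Set.Icc 0 s))
    (hUbsc₂ : ∀ y : X₂, ∀ t ∈ Set.Icc 0 T, ContinuousOn (fun s => Ub t s y) (Set.Icc t T))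
    -- strongly continuous coefficients
    (Q12 : ℝ → X₁ →L[ℝ] X₂)
    (hQ12sc : ∀ x : X₁, ContinuousOn (fun t => Q12 t x) (Set.Icc 0 T))
    (Q1 : ℝ → X₁ →L[ℝ] X₁)
    (hQ1sc : ∀ x : X₁, ContinuousOn (fun t => Q1 t x) (Set.Icc 0 T))
    -- the perturbed forward evolution family Ω⃖
    (Ωl : ℝ → ℝ → X₁ →L[ℝ] X₁)
    (hΩlid : ∀ s ∈ Set.Icc 0 T, Ωl s s = ContinuousLinearMap.id ℝ X₁)
    (hΩlcomp : ∀ s r t : ℝ, 0 ≤ s → s ≤ r → r ≤ t → t ≤ T →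
      Ωl t s = (Ωl t r).comp (Ωl r s))
    (MΩl : ℝ) (hΩlbdd : ∀ s t : ℝ, 0 ≤ s → s ≤ t → t ≤ T → ‖Ωl t s‖ ≤ MΩl)
    (hΩlsc₁ : ∀ x : X₁, ∀ s ∈ Set.Icc 0 T, ContinuousOn (fun t => Ωl t s x) (Set.Icc s T))
    (hΩlsc₂ : ∀ x : X₁, ∀ t ∈ Set.Icc 0 T, ContinuousOn (fun s => Ωl t s x) (Set.Icc 0 t))
    (hΩleq : ∀ x : X₁, ∀ s t : ℝ, 0 ≤ s → s ≤ t → t ≤ T →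
      Ωl t s x = Ul t s x - ∫ r in s..t, Ωl t r (Q1 r (Ul r s x)))
    (G : X₁ →L[ℝ] X₂) :
    ∃ P : ℝ → X₁ →L[ℝ] X₂,
      (∀ x : X₁, ContinuousOn (fun t => P t x) (Set.Icc 0 T)) ∧
      -- P is given by the representation formula
      (∀ t ∈ Set.Icc 0 T, ∀ x : X₁,
        P t x = Ub t T (G (Ωl T t x)) + ∫ r in t..T, Ub t r (Q12 r (Ωl r t x))) ∧
      -- P solves the linear integral equation
      (∀ t ∈ Set.Icc 0 T, ∀ x : X₁,
        P t x = Ub t T (G (Ul T t x)) +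
          ∫ r in t..T, Ub t r (Q12 r (Ul r t x) - P r (Q1 r (Ul r t x)))) ∧
      -- and it is the unique strongly continuous solution
      (∀ Q : ℝ → X₁ →L[ℝ] X₂,
        (∀ x : X₁, ContinuousOn (fun t => Q t x) (Set.Icc 0 T)) →
        (∀ t ∈ Set.Icc 0 T, ∀ x : X₁,
          Q t x = Ub t T (G (Ul T t x)) +
            ∫ r in t..T, Ub t r (Q12 r (Ul r t x) - Q r (Q1 r (Ul r t x)))) →
        ∀ t ∈ Set.Icc 0 T, Q t = P t) :=
  linear_integral_equation_unique_solution_left_general T hT Ul MUl hUlbdd hUlsc₁ Ub hUbcomp MUb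
    hUbbdd hUbsc₁ hUbsc₂ Q12 hQ12sc Q1 hQ1sc Ωl hΩlcomp MΩl hΩlbdd hΩlsc₁ hΩlsc₂ hΩleq G
end

section
/- Under the combined hypotheses (Ω⃖ perturbed by Q₁ on the left family, Ω⃗ perturbed by Q₂ on the right family), for every G ∈ L(X₁,X₂) the equation P(t) = U⃗_{t,T} G U⃖_{T,t} + ∫_t^T U⃗_{t,r}[Q₁₂(r) − P(r)Q₁(r) − Q₂(r)P(r)] U⃖_{r,t} dr has the unique strongly continuous solution P(t) = Ω⃗_{t,T} G Ω⃖_{T,t} + ∫_t^T Ω⃗_{t,r} Q₁₂(r) Ω⃖_{r,t} dr. -/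
open MeasureTheory intervalIntegral

open Set


section AuxLemmas

variable {E F : Type*} [NormedAddCommGroup E] [NormedSpace ℝ E]
  [NormedAddCommGroup F] [NormedSpace ℝ F]

/-- Banach–Steinhaus on a compact interval for a strongly continuous family. -/
theorem aux_bs [CompleteSpace E] {a b : ℝ} (A : ℝ → E →L[ℝ] F)
    (hA : ∀ x, ContinuousOn (fun t => A t x) (Icc a b)) :
    ∃ M : ℝ, 0 ≤ M ∧ ∀ t ∈ Icc a b, ‖A t‖ ≤ M := by
  have h : ∀ x : E, ∃ C : ℝ, ∀ i : Icc a b, ‖A i x‖ ≤ C := by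
    intro x
    obtain ⟨C, hC⟩ := (isCompact_Icc (a := a) (b := b)).exists_bound_of_continuousOn (hA x)
    exact ⟨C, fun i => hC i i.2⟩
  obtain ⟨C', hC'⟩ := banach_steinhaus h
  exact ⟨max C' 0, le_max_right _ _, fun t ht => le_trans (hC' ⟨t, ht⟩) (le_max_left _ _)⟩

/-- Applying a strongly continuous, uniformly bounded operator family to a continuous
function yields a continuous function. -/
theorem aux_apply_cont {α : Type*} [TopologicalSpace α] {A : α → E →L[ℝ] F} {S : Set α}
    {M : ℝ} (hA : ∀ x, ContinuousOn (fun t => A t x) S) (hM : ∀ t ∈ S, ‖A t‖ ≤ M)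
    {f : α → E} (hf : ContinuousOn f S) :
    ContinuousOn (fun t => A t (f t)) S := by
  intro t₀ ht₀
  have h1 : ContinuousWithinAt (fun t => A t (f t₀)) S t₀ := hA (f t₀) t₀ ht₀
  have h2 : Filter.Tendsto (fun t => A t (f t) - A t (f t₀)) (nhdsWithin t₀ S) (nhds 0) := by
    have hb : ∀ᶠ t in nhdsWithin t₀ S, ‖A t (f t) - A t (f t₀)‖ ≤ M * ‖f t - f t₀‖ := by
      filter_upwards [self_mem_nhdsWithin] with t ht
      calc ‖A t (f t) - A t (f t₀)‖ = ‖A t (f t - f t₀)‖ := by rw [map_sub]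
        _ ≤ ‖A t‖ * ‖f t - f t₀‖ := (A t).le_opNorm _
        _ ≤ M * ‖f t - f t₀‖ := by
            have h0 : (0:ℝ) ≤ ‖f t - f t₀‖ := norm_nonneg _
            nlinarith [norm_nonneg (A t), hM t ht]
    have hg : Filter.Tendsto (fun t => M * ‖f t - f t₀‖) (nhdsWithin t₀ S) (nhds 0) := by
      have h3 : Filter.Tendsto (fun t => f t - f t₀) (nhdsWithin t₀ S) (nhds 0) := by
        have := Filter.Tendsto.sub (hf t₀ ht₀) (tendsto_const_nhds (x := f t₀))
        simpa using this
      simpa using (h3.norm.const_mul M)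
    exact squeeze_zero_norm' hb hg
  have h4 := h2.add h1
  simp only [sub_add_cancel, zero_add] at h4
  exact h4

end AuxLemmas

section Joint

variable {E : Type*} [NormedAddCommGroup E] [NormedSpace ℝ E]

/-- Joint strong continuity of a backward evolution family. -/
theorem aux_joint_back {T : ℝ} {U : ℝ → ℝ → E →L[ℝ] E} {M : ℝ}
    (hid : ∀ s ∈ Icc (0:ℝ) T, U s s = ContinuousLinearMap.id ℝ E)
    (hcomp : ∀ t r s : ℝ, 0 ≤ t → t ≤ r → r ≤ s → s ≤ T → U t s = (U t r).comp (U r s))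
    (hbdd : ∀ t s : ℝ, 0 ≤ t → t ≤ s → s ≤ T → ‖U t s‖ ≤ M)
    (hsc₁ : ∀ z : E, ∀ s ∈ Icc (0:ℝ) T, ContinuousOn (fun t => U t s z) (Icc 0 s))
    (hsc₂ : ∀ z : E, ∀ t ∈ Icc (0:ℝ) T, ContinuousOn (fun s => U t s z) (Icc t T))
    (z : E) :
    ContinuousOn (fun p : ℝ × ℝ => U p.1 p.2 z) {p : ℝ × ℝ | 0 ≤ p.1 ∧ p.1 ≤ p.2 ∧ p.2 ≤ T} := by
  set Δ : Set (ℝ × ℝ) := {p : ℝ × ℝ | 0 ≤ p.1 ∧ p.1 ≤ p.2 ∧ p.2 ≤ T} with hΔ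
  rintro ⟨t₀, s₀⟩ ⟨h0 : (0:ℝ) ≤ t₀, hts : t₀ ≤ s₀, hsT : s₀ ≤ T⟩
  rcases lt_or_eq_of_le hts with hlt | heq
  · -- off-diagonal case: t₀ < s₀
    set m := (t₀ + s₀) / 2 with hm
    have hm1 : t₀ < m := by simp only [hm]; linarith
    have hm2 : m < s₀ := by simp only [hm]; linarith
    have hm0 : (0:ℝ) ≤ m := le_of_lt (lt_of_le_of_lt h0 hm1)
    have hmT : m ≤ T := le_trans (le_of_lt hm2) hsT
    set S' : Set (ℝ × ℝ) := {p : ℝ × ℝ | 0 ≤ p.1 ∧ p.1 ≤ m ∧ m ≤ p.2 ∧ p.2 ≤ T} with hS'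
    have hcont : ContinuousOn (fun p : ℝ × ℝ => U p.1 m (U m p.2 z)) S' := by
      apply aux_apply_cont (A := fun p : ℝ × ℝ => U p.1 m) (M := M)
      · intro y
        apply (hsc₁ y m ⟨hm0, hmT⟩).comp continuous_fst.continuousOn
        rintro ⟨a, b⟩ ⟨ha0, ham, _, _⟩; exact ⟨ha0, ham⟩
      · rintro ⟨a, b⟩ ⟨ha0, ham, _, _⟩; exact hbdd a m ha0 ham hmT
      · apply (hsc₂ z m ⟨hm0, hmT⟩).comp continuous_snd.continuousOn
        rintro ⟨a, b⟩ ⟨_, _, hmb, hbT⟩; exact ⟨hmb, hbT⟩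
    set V : Set (ℝ × ℝ) := {p : ℝ × ℝ | p.1 < m ∧ m < p.2} with hV
    have hVopen : IsOpen V := by
      apply IsOpen.inter
      · exact isOpen_lt continuous_fst continuous_const
      · exact isOpen_lt continuous_const continuous_snd
    have hVmem : V ∈ nhds (t₀, s₀) := hVopen.mem_nhds ⟨hm1, hm2⟩
    rw [← continuousWithinAt_inter hVmem]
    have hsub : Δ ∩ V ⊆ S' := by
      rintro ⟨a, b⟩ ⟨⟨ha0, _, hbT⟩, ham, hmb⟩
      exact ⟨ha0, le_of_lt ham, le_of_lt hmb, hbT⟩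
    have hcwa : ContinuousWithinAt (fun p : ℝ × ℝ => U p.1 m (U m p.2 z)) (Δ ∩ V) (t₀, s₀) :=
      (hcont (t₀, s₀) ⟨h0, le_of_lt hm1, le_of_lt hm2, hsT⟩).mono hsub
    apply hcwa.congr
    · rintro ⟨a, b⟩ ⟨⟨ha0, hab, hbT⟩, ham, hmb⟩
      show U a b z = U a m (U m b z)
      rw [hcomp a m b ha0 (le_of_lt ham) (le_of_lt hmb) hbT]; rfl
    · show U t₀ s₀ z = U t₀ m (U m s₀ z)
      rw [hcomp t₀ m s₀ h0 (le_of_lt hm1) (le_of_lt hm2) hsT]; rfl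
  · -- diagonal case: t₀ = s₀ =: c
    subst heq
    have hMnn : (0:ℝ) ≤ M := by
      have := hbdd t₀ t₀ h0 le_rfl hsT
      exact le_trans (norm_nonneg _) this
    have hval : U t₀ t₀ z = z := by rw [hid t₀ ⟨h0, hsT⟩]; rfl
    rw [ContinuousWithinAt, hval, Metric.tendsto_nhdsWithin_nhds]
    intro ε hε
    set ε' := ε / (2 * M + 3) with hε'
    have hε'pos : 0 < ε' := by positivity
    -- choose u with t₀ ≤ u ≤ T, ‖U t₀ u z - z‖ < ε', and (s close ∧ s ≤ T → s ≤ u)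
    have hu : ∃ u : ℝ, t₀ ≤ u ∧ u ≤ T ∧ ‖U t₀ u z - z‖ < ε' ∧
        ∃ δ₁ > (0:ℝ), ∀ s : ℝ, s ≤ T → |s - t₀| < δ₁ → s ≤ u := by
      rcases eq_or_lt_of_le hsT with hTeq | hTlt
      · refine ⟨T, hsT, le_rfl, ?_, 1, one_pos, fun s hs _ => hs⟩
        rw [← hTeq, hval]; simpa using hε'pos
      · have hc := hsc₂ z t₀ ⟨h0, hsT⟩
        have hc2 := hc t₀ ⟨le_rfl, hsT⟩
        rw [ContinuousWithinAt, Metric.tendsto_nhdsWithin_nhds] at hc2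
        obtain ⟨δ₀, hδ₀, hδ₀'⟩ := hc2 ε' hε'pos
        set u := min (t₀ + δ₀ / 2) T with huu
        have hu1 : t₀ < u := by
          apply lt_min (by linarith) hTlt
        have hu2 : u ≤ T := min_le_right _ _
        refine ⟨u, le_of_lt hu1, hu2, ?_, u - t₀, by linarith, fun s _ hs => by
          rw [abs_lt] at hs; linarith [hs.2]⟩
        have : dist u t₀ < δ₀ := by
          rw [Real.dist_eq, abs_of_nonneg (by linarith : (0:ℝ) ≤ u - t₀)]
          have : u ≤ t₀ + δ₀ / 2 := min_le_left _ _
          linarith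
        have := hδ₀' ⟨le_of_lt hu1, hu2⟩ this
        rwa [hval, dist_eq_norm] at this
    obtain ⟨u, htu, huT, hsmall, δ₁, hδ₁pos, hδ₁⟩ := hu
    have hu0 : (0:ℝ) ≤ u := le_trans h0 htu
    -- continuity of τ ↦ U τ u z at t₀ within Icc 0 u
    have hc1 := hsc₁ z u ⟨hu0, huT⟩ t₀ ⟨h0, htu⟩
    rw [ContinuousWithinAt, Metric.tendsto_nhdsWithin_nhds] at hc1
    obtain ⟨δ₂, hδ₂pos, hδ₂⟩ := hc1 ε' hε'pos
    refine ⟨min δ₁ δ₂, lt_min hδ₁pos hδ₂pos, ?_⟩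
    rintro ⟨t, s⟩ ⟨ht0 : (0:ℝ) ≤ t, hts' : t ≤ s, hsT' : s ≤ T⟩ hdist
    rw [Prod.dist_eq, max_lt_iff] at hdist
    obtain ⟨hdt, hds⟩ := hdist
    rw [Real.dist_eq] at hdt hds
    have hsu : s ≤ u := hδ₁ s hsT' (lt_of_lt_of_le hds (min_le_left _ _))
    have htu' : t ≤ u := le_trans hts' hsu
    have hkey : U t s (U s u z) = U t u z := by
      rw [hcomp t s u ht0 hts' hsu huT]; rfl
    have hb1 : ‖U t s z - U t s (U s u z)‖ ≤ M * ‖z - U s u z‖ := by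
      rw [← map_sub]
      calc ‖U t s (z - U s u z)‖ ≤ ‖U t s‖ * ‖z - U s u z‖ := (U t s).le_opNorm _
        _ ≤ M * ‖z - U s u z‖ :=
          mul_le_mul_of_nonneg_right (hbdd t s ht0 hts' (le_trans hsu huT)) (norm_nonneg _)
    have hd1 : ‖U s u z - U t₀ u z‖ < ε' := by
      have := hδ₂ (x := s) ⟨le_trans ht0 hts', hsu⟩
        (by rw [Real.dist_eq]; exact lt_of_lt_of_le hds (min_le_right _ _))
      rwa [dist_eq_norm] at this
    have hd2 : ‖U t u z - U t₀ u z‖ < ε' := by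
      have := hδ₂ (x := t) ⟨ht0, htu'⟩
        (by rw [Real.dist_eq]; exact lt_of_lt_of_le hdt (min_le_right _ _))
      rwa [dist_eq_norm] at this
    have hz : ‖z - U s u z‖ < 2 * ε' := by
      have e1 : ‖z - U t₀ u z‖ < ε' := by rw [norm_sub_rev]; exact hsmall
      have e2 : ‖U t₀ u z - U s u z‖ < ε' := by rw [norm_sub_rev]; exact hd1
      calc ‖z - U s u z‖ ≤ ‖z - U t₀ u z‖ + ‖U t₀ u z - U s u z‖ :=
            norm_sub_le_norm_sub_add_norm_sub _ _ _
        _ < ε' + ε' := add_lt_add e1 e2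
        _ = 2 * ε' := by ring
    have htuz : ‖U t u z - z‖ < 2 * ε' := by
      calc ‖U t u z - z‖ ≤ ‖U t u z - U t₀ u z‖ + ‖U t₀ u z - z‖ := norm_sub_le_norm_sub_add_norm_sub _ _ _
        _ < ε' + ε' := add_lt_add hd2 hsmall
        _ = 2 * ε' := by ring
    rw [dist_eq_norm]
    have hε'eq : ε' * (2 * M + 3) = ε := by
      rw [hε']; field_simp
    calc ‖U t s z - z‖ = ‖(U t s z - U t s (U s u z)) + (U t u z - z)‖ := by
          rw [← hkey]; congr 1; abel
      _ ≤ ‖U t s z - U t s (U s u z)‖ + ‖U t u z - z‖ := norm_add_le _ _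
      _ ≤ M * ‖z - U s u z‖ + ‖U t u z - z‖ := by linarith
      _ < M * (2 * ε') + 2 * ε' := by
          have := mul_le_mul_of_nonneg_left (le_of_lt hz) hMnn
          linarith
      _ ≤ ε := by nlinarith [hε'pos, hMnn]



/-- Joint strong continuity of a forward evolution family (derived by time reversal). -/
theorem aux_joint_fwd {T : ℝ} {U : ℝ → ℝ → E →L[ℝ] E} {M : ℝ}
    (hid : ∀ s ∈ Icc (0:ℝ) T, U s s = ContinuousLinearMap.id ℝ E)
    (hcomp : ∀ s r t : ℝ, 0 ≤ s → s ≤ r → r ≤ t → t ≤ T → U t s = (U t r).comp (U r s))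
    (hbdd : ∀ s t : ℝ, 0 ≤ s → s ≤ t → t ≤ T → ‖U t s‖ ≤ M)
    (hsc₁ : ∀ z : E, ∀ s ∈ Icc (0:ℝ) T, ContinuousOn (fun t => U t s z) (Icc s T))
    (hsc₂ : ∀ z : E, ∀ t ∈ Icc (0:ℝ) T, ContinuousOn (fun s => U t s z) (Icc 0 t))
    (z : E) :
    ContinuousOn (fun p : ℝ × ℝ => U p.1 p.2 z) {p : ℝ × ℝ | 0 ≤ p.2 ∧ p.2 ≤ p.1 ∧ p.1 ≤ T} := by
  set V : ℝ → ℝ → E →L[ℝ] E := fun a b => U (T - a) (T - b) with hV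
  have hVid : ∀ a ∈ Icc (0:ℝ) T, V a a = ContinuousLinearMap.id ℝ E := by
    intro a ⟨ha, haT⟩
    exact hid (T - a) ⟨by linarith, by linarith⟩
  have hVcomp : ∀ a r b : ℝ, 0 ≤ a → a ≤ r → r ≤ b → b ≤ T →
      V a b = (V a r).comp (V r b) := by
    intro a r b ha har hrb hbT
    exact hcomp (T - b) (T - r) (T - a) (by linarith) (by linarith) (by linarith) (by linarith)
  have hVbdd : ∀ a b : ℝ, 0 ≤ a → a ≤ b → b ≤ T → ‖V a b‖ ≤ M := by
    intro a b ha hab hbT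
    exact hbdd (T - b) (T - a) (by linarith) (by linarith) (by linarith)
  have hVsc₁ : ∀ y : E, ∀ b ∈ Icc (0:ℝ) T, ContinuousOn (fun a => V a b y) (Icc 0 b) := by
    intro y b ⟨hb, hbT⟩
    have := hsc₁ y (T - b) ⟨by linarith, by linarith⟩
    apply this.comp (continuous_const.sub continuous_id).continuousOn
    intro a ⟨ha, hab⟩
    exact mem_Icc.mpr ⟨by simp only [Pi.sub_apply, id_eq]; linarith, by simp only [Pi.sub_apply, id_eq]; linarith⟩
  have hVsc₂ : ∀ y : E, ∀ a ∈ Icc (0:ℝ) T, ContinuousOn (fun b => V a b y) (Icc a T) := by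
    intro y a ⟨ha, haT⟩
    have := hsc₂ y (T - a) ⟨by linarith, by linarith⟩
    apply this.comp (continuous_const.sub continuous_id).continuousOn
    intro b ⟨hab, hbT⟩
    exact mem_Icc.mpr ⟨by simp only [Pi.sub_apply, id_eq]; linarith, by simp only [Pi.sub_apply, id_eq]; linarith⟩
  have hVjoint := aux_joint_back hVid hVcomp hVbdd hVsc₁ hVsc₂ z
  have hmap : Continuous (fun p : ℝ × ℝ => ((T - p.1, T - p.2) : ℝ × ℝ)) :=
    (continuous_const.sub continuous_fst).prodMk (continuous_const.sub continuous_snd)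
  have hmapsTo : MapsTo (fun p : ℝ × ℝ => ((T - p.1, T - p.2) : ℝ × ℝ))
      {p : ℝ × ℝ | 0 ≤ p.2 ∧ p.2 ≤ p.1 ∧ p.1 ≤ T}
      {p : ℝ × ℝ | 0 ≤ p.1 ∧ p.1 ≤ p.2 ∧ p.2 ≤ T} := by
    rintro ⟨a, b⟩ ⟨h1, h2, h3⟩
    refine ⟨?_, ?_, ?_⟩ <;> dsimp only <;> linarith
  have hfin := hVjoint.comp hmap.continuousOn hmapsTo
  apply hfin.congr
  intro p _
  show U p.1 p.2 z = V (T - p.1) (T - p.2) z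
  simp only [hV, sub_sub_cancel]

/-- Continuous extension (by clamping) of a function continuous on the triangle
`{(s, r) | a ≤ s ≤ r ≤ b}`. -/
theorem aux_ext {X : Type*} [NormedAddCommGroup X] {a b : ℝ} (hab : a ≤ b) {f : ℝ → ℝ → X}
    (hf : ContinuousOn (fun p : ℝ × ℝ => f p.1 p.2)
      {p : ℝ × ℝ | a ≤ p.1 ∧ p.1 ≤ p.2 ∧ p.2 ≤ b}) :
    ∃ F : ℝ → ℝ → X, Continuous (fun p : ℝ × ℝ => F p.1 p.2) ∧
      (∀ s r : ℝ, a ≤ s → s ≤ r → r ≤ b → F s r = f s r) ∧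
      (∃ C : ℝ, 0 ≤ C ∧ ∀ s r : ℝ, ‖F s r‖ ≤ C) := by
  set Δ : Set (ℝ × ℝ) := {p : ℝ × ℝ | a ≤ p.1 ∧ p.1 ≤ p.2 ∧ p.2 ≤ b} with hΔ
  set π : ℝ × ℝ → ℝ × ℝ :=
    fun p => (max a (min p.1 (max a (min p.2 b))), max a (min p.2 b)) with hπ
  have hπcont : Continuous π := by
    apply Continuous.prodMk
    · exact (continuous_const.max ((continuous_fst).min
        ((continuous_const.max (continuous_snd.min continuous_const)))))
    · exact continuous_const.max (continuous_snd.min continuous_const)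
  have hπΔ : ∀ p : ℝ × ℝ, π p ∈ Δ := by
    intro p
    refine ⟨le_max_left _ _, ?_, ?_⟩
    · exact max_le (le_max_left _ _) (min_le_right _ _)
    · exact max_le hab (min_le_right _ _)
  have hπid : ∀ p : ℝ × ℝ, p ∈ Δ → π p = p := by
    rintro ⟨s, r⟩ ⟨has, hsr, hrb⟩
    have h1 : max a (min r b) = r := by
      rw [min_eq_left hrb, max_eq_right (le_trans has hsr)]
    simp only [hπ, h1, Prod.mk.injEq]
    constructor
    · rw [min_eq_left hsr, max_eq_right has]
    · trivial
  have hΔcomp : IsCompact Δ := by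
    have hclosed : IsClosed Δ := by
      apply IsClosed.inter (isClosed_le continuous_const continuous_fst)
      exact IsClosed.inter (isClosed_le continuous_fst continuous_snd)
        (isClosed_le continuous_snd continuous_const)
    apply ((isCompact_Icc (a := a) (b := b)).prod
      (isCompact_Icc (a := a) (b := b))).of_isClosed_subset hclosed
    rintro ⟨s, r⟩ ⟨has, hsr, hrb⟩
    exact ⟨⟨has, le_trans hsr hrb⟩, ⟨le_trans has hsr, hrb⟩⟩
  obtain ⟨C, hC⟩ := hΔcomp.exists_bound_of_continuousOn hf
  have hC0 : 0 ≤ C := le_trans (norm_nonneg _) (hC (a, a) ⟨le_rfl, le_rfl, hab⟩)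
  refine ⟨fun s r => f (π (s, r)).1 (π (s, r)).2, ?_, ?_, C, hC0, ?_⟩
  · exact hf.comp_continuous hπcont hπΔ
  · intro s r has hsr hrb
    show f (π (s, r)).1 (π (s, r)).2 = f s r
    rw [hπid (s, r) ⟨has, hsr, hrb⟩]
  · intro s r
    exact hC (π (s, r)) (hπΔ (s, r))


/-- Continuity of a parametrized interval integral with varying lower endpoint,
for an integrand jointly continuous on the triangle `{0 ≤ t ≤ r ≤ T}`. -/
theorem aux_cont_param {X : Type*} [NormedAddCommGroup X] [NormedSpace ℝ X] [CompleteSpace X]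
    {T : ℝ} (hT : 0 ≤ T) {f : ℝ → ℝ → X}
    (hf : ContinuousOn (fun p : ℝ × ℝ => f p.1 p.2)
      {p : ℝ × ℝ | 0 ≤ p.1 ∧ p.1 ≤ p.2 ∧ p.2 ≤ T}) :
    ContinuousOn (fun t => ∫ r in t..T, f t r) (Icc 0 T) := by
  obtain ⟨F, hFcont, hFeq, C, hC0, hFbdd⟩ := aux_ext hT hf
  have h1 : Continuous (fun t => ∫ r in T..t, F t r) := by
    exact continuous_parametric_intervalIntegral_of_continuous hFcont continuous_id
  have h2 : Continuous (fun t => ∫ r in t..T, F t r) := by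
    have : (fun t => ∫ r in t..T, F t r) = fun t => -∫ r in T..t, F t r := by
      funext t; rw [intervalIntegral.integral_symm]
    rw [this]; exact h1.neg
  apply h2.continuousOn.congr
  intro t ⟨ht0, htT⟩
  apply intervalIntegral.integral_congr
  intro r hr
  rw [uIcc_of_le htT] at hr
  exact (hFeq t r ht0 hr.1 hr.2).symm

/-- Continuity of `r ↦ ∫ s in t..r, g r s` for `g` jointly continuous on
the triangle `{t ≤ s ≤ r ≤ T}`. -/
theorem aux_cont_param' {X : Type*} [NormedAddCommGroup X] [NormedSpace ℝ X] [CompleteSpace X]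
    {t T : ℝ} (htT : t ≤ T) {g : ℝ → ℝ → X}
    (hg : ContinuousOn (fun p : ℝ × ℝ => g p.1 p.2)
      {p : ℝ × ℝ | t ≤ p.2 ∧ p.2 ≤ p.1 ∧ p.1 ≤ T}) :
    ContinuousOn (fun r => ∫ s in t..r, g r s) (Icc t T) := by
  have hg' : ContinuousOn (fun p : ℝ × ℝ => g p.2 p.1)
      {p : ℝ × ℝ | t ≤ p.1 ∧ p.1 ≤ p.2 ∧ p.2 ≤ T} := by
    apply hg.comp continuous_swap.continuousOn
    rintro ⟨a, b⟩ ⟨h1, h2, h3⟩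
    exact ⟨h1, h2, h3⟩
  obtain ⟨G, hGcont, hGeq, C, hC0, hGbdd⟩ := aux_ext (f := fun a b => g b a) htT hg'
  have h1 : Continuous (fun r => ∫ s in t..r, G s r) := by
    have hG' : Continuous (fun p : ℝ × ℝ => G p.2 p.1) := hGcont.comp continuous_swap
    exact continuous_parametric_intervalIntegral_of_continuous
      (μ := volume) (f := fun r s => G s r) hG' continuous_id
  apply h1.continuousOn.congr
  intro r ⟨htr, hrT⟩
  apply intervalIntegral.integral_congr
  intro s hs
  rw [uIcc_of_le htr] at hs
  exact (hGeq s r hs.1 hs.2 hrT).symm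

/-- Fubini on the triangle `{t ≤ s ≤ r ≤ T}` for a jointly continuous integrand. -/
theorem aux_fubini {X : Type*} [NormedAddCommGroup X] [NormedSpace ℝ X] [CompleteSpace X]
    {t T : ℝ} (htT : t ≤ T) {f : ℝ → ℝ → X}
    (hf : ContinuousOn (fun p : ℝ × ℝ => f p.1 p.2)
      {p : ℝ × ℝ | t ≤ p.1 ∧ p.1 ≤ p.2 ∧ p.2 ≤ T}) :
    ∫ r in t..T, (∫ s in t..r, f s r) = ∫ s in t..T, (∫ r in s..T, f s r) := by
  obtain ⟨F, hFcont, hFeq, C, hC0, hFbdd⟩ := aux_ext htT hf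
  set G : ℝ × ℝ → X := fun q => if q.1 ≤ q.2 then F q.1 q.2 else 0 with hG
  have hGmeas : StronglyMeasurable G := by
    have : G = Set.indicator {q : ℝ × ℝ | q.1 ≤ q.2} (fun q => F q.1 q.2) := by
      funext q
      simp only [hG, Set.indicator_apply, mem_setOf_eq]
    rw [this]
    exact hFcont.stronglyMeasurable.indicator
      ((isClosed_le continuous_fst continuous_snd).measurableSet)
  have hGbdd : ∀ q : ℝ × ℝ, ‖G q‖ ≤ C := by
    intro q
    by_cases h : q.1 ≤ q.2
    · simp only [hG, if_pos h]; exact hFbdd _ _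
    · simp only [hG, if_neg h, norm_zero]; exact hC0
  haveI hfin : IsFiniteMeasure (volume.restrict (Ioc t T)) :=
    ⟨by rw [Measure.restrict_apply_univ]; exact measure_Ioc_lt_top⟩
  have hint : Integrable (Function.uncurry (fun r s => G (s, r)))
      ((volume.restrict (Ioc t T)).prod (volume.restrict (Ioc t T))) := by
    apply Integrable.mono' (integrable_const C)
    · exact (hGmeas.comp_measurable
        (measurable_snd.prodMk measurable_fst)).aestronglyMeasurable
    · filter_upwards with q
      exact hGbdd _
  have hswap := MeasureTheory.integral_integral_swap hint
  -- identify LHS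
  have hL : ∫ r in t..T, (∫ s in t..r, f s r) =
      ∫ r in Ioc t T, (∫ s in Ioc t T, G (s, r)) := by
    rw [intervalIntegral.integral_of_le htT]
    apply setIntegral_congr_fun measurableSet_Ioc
    intro r hr
    have htr : t ≤ r := le_of_lt hr.1
    have hrT : r ≤ T := hr.2
    have e1 : ∫ s in t..r, f s r = ∫ s in Ioc t r, f s r :=
      intervalIntegral.integral_of_le htr
    have e2 : ∫ s in Ioc t T, G (s, r) = ∫ s in Ioc t r, f s r := by
      have : ∫ s in Ioc t T, G (s, r) =
          ∫ s in Ioc t T, Set.indicator (Iic r) (fun s => F s r) s := by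
        apply setIntegral_congr_fun measurableSet_Ioc
        intro s _
        by_cases h : s ≤ r
        · rw [Set.indicator_of_mem (by exact h : s ∈ Iic r)]
          simp only [hG, if_pos h]
        · rw [Set.indicator_of_notMem (by exact h : s ∉ Iic r)]
          simp only [hG, if_neg h]
      rw [this, setIntegral_indicator measurableSet_Iic]
      have hset : Ioc t T ∩ Iic r = Ioc t r := by
        rw [Set.Ioc_inter_Iic, min_eq_right hrT]
      rw [hset]
      apply setIntegral_congr_fun measurableSet_Ioc
      intro s hs
      exact hFeq s r (le_of_lt hs.1) hs.2 hrT
    dsimp only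
    rw [e1, e2]
  -- identify RHS
  have hR : ∫ s in t..T, (∫ r in s..T, f s r) =
      ∫ s in Ioc t T, (∫ r in Ioc t T, G (s, r)) := by
    rw [intervalIntegral.integral_of_le htT]
    apply setIntegral_congr_fun measurableSet_Ioc
    intro s hs
    have hts : t < s := hs.1
    have hsT : s ≤ T := hs.2
    have e1 : ∫ r in s..T, f s r = ∫ r in Ioc s T, f s r :=
      intervalIntegral.integral_of_le hsT
    have e2 : ∫ r in Ioc t T, G (s, r) = ∫ r in Ioc s T, f s r := by
      have : ∫ r in Ioc t T, G (s, r) =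
          ∫ r in Ioc t T, Set.indicator (Ici s) (fun r => F s r) r := by
        apply setIntegral_congr_fun measurableSet_Ioc
        intro r _
        by_cases h : s ≤ r
        · rw [Set.indicator_of_mem (by exact h : r ∈ Ici s)]
          simp only [hG, if_pos h]
        · rw [Set.indicator_of_notMem (by exact h : r ∉ Ici s)]
          simp only [hG, if_neg h]
      rw [this, setIntegral_indicator measurableSet_Ici]
      have hset : Ioc t T ∩ Ici s = Icc s T := by
        ext r
        simp only [mem_inter_iff, mem_Ioc, mem_Ici, mem_Icc]
        constructor
        · rintro ⟨⟨_, h2⟩, h3⟩; exact ⟨h3, h2⟩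
        · rintro ⟨h1, h2⟩; exact ⟨⟨lt_of_lt_of_le hts h1, h2⟩, h1⟩
      rw [hset, MeasureTheory.integral_Icc_eq_integral_Ioc]
      apply setIntegral_congr_fun measurableSet_Ioc
      intro r hr
      exact hFeq s r (le_of_lt hts) (le_of_lt hr.1) hr.2
    dsimp only
    rw [e1, e2]
  rw [hL, hR]
  exact hswap

end Joint

theorem aux_int_pow {t T : ℝ} (n : ℕ) :
    ∫ r in t..T, (T - r)^n = (T - t)^(n+1) / (n+1) := by
  rw [intervalIntegral.integral_comp_sub_left (fun x => x^n) T]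
  rw [integral_pow]
  simp

set_option maxHeartbeats 2000000

/-- representation of the unique strongly continuous solution of the
linear integral equation with both perturbations
`P(t) = U⃗_{t,T} G U⃖_{T,t} + ∫_t^T U⃗_{t,r}[Q₁₂(r) − P(r)Q₁(r) − Q₂(r)P(r)]U⃖_{r,t} dr`
via the perturbed families `Ω⃗` and `Ω⃖`. -/
theorem linear_integral_equation_unique_solution_both
    {X₁ X₂ : Type*}
    [NormedAddCommGroup X₁] [NormedSpace ℝ X₁] [CompleteSpace X₁]
    [NormedAddCommGroup X₂] [NormedSpace ℝ X₂] [CompleteSpace X₂]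
    (T : ℝ) (hT : 0 ≤ T)
    -- forward evolution family in L(X₁): strongly continuous, uniformly bounded
    (Ul : ℝ → ℝ → X₁ →L[ℝ] X₁)
    (hUlid : ∀ s ∈ Set.Icc 0 T, Ul s s = ContinuousLinearMap.id ℝ X₁)
    (hUlcomp : ∀ s r t : ℝ, 0 ≤ s → s ≤ r → r ≤ t → t ≤ T →
      Ul t s = (Ul t r).comp (Ul r s))
    (MUl : ℝ) (hUlbdd : ∀ s t : ℝ, 0 ≤ s → s ≤ t → t ≤ T → ‖Ul t s‖ ≤ MUl)
    (hUlsc₁ : ∀ x : X₁, ∀ s ∈ Set.Icc 0 T, ContinuousOn (fun t => Ul t s x) (Set.Icc s T))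
    (hUlsc₂ : ∀ x : X₁, ∀ t ∈ Set.Icc 0 T, ContinuousOn (fun s => Ul t s x) (Set.Icc 0 t))
    -- backward evolution family in L(X₂): strongly continuous, uniformly bounded
    (Ub : ℝ → ℝ → X₂ →L[ℝ] X₂)
    (hUbid : ∀ s ∈ Set.Icc 0 T, Ub s s = ContinuousLinearMap.id ℝ X₂)
    (hUbcomp : ∀ t r s : ℝ, 0 ≤ t → t ≤ r → r ≤ s → s ≤ T →
      Ub t s = (Ub t r).comp (Ub r s))
    (MUb : ℝ) (hUbbdd : ∀ t s : ℝ, 0 ≤ t → t ≤ s → s ≤ T → ‖Ub t s‖ ≤ MUb)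
    (hUbsc₁ : ∀ y : X₂, ∀ s ∈ Set.Icc 0 T, ContinuousOn (fun t => Ub t s y) (Set.Icc 0 s))
    (hUbsc₂ : ∀ y : X₂, ∀ t ∈ Set.Icc 0 T, ContinuousOn (fun s => Ub t s y) (Set.Icc t T))
    -- strongly continuous coefficients
    (Q12 : ℝ → X₁ →L[ℝ] X₂)
    (hQ12sc : ∀ x : X₁, ContinuousOn (fun t => Q12 t x) (Set.Icc 0 T))
    (Q1 : ℝ → X₁ →L[ℝ] X₁)
    (hQ1sc : ∀ x : X₁, ContinuousOn (fun t => Q1 t x) (Set.Icc 0 T))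
    (Q2 : ℝ → X₂ →L[ℝ] X₂)
    (hQ2sc : ∀ y : X₂, ContinuousOn (fun t => Q2 t y) (Set.Icc 0 T))
    -- the perturbed forward evolution family Ω⃖
    (Ωl : ℝ → ℝ → X₁ →L[ℝ] X₁)
    (hΩlid : ∀ s ∈ Set.Icc 0 T, Ωl s s = ContinuousLinearMap.id ℝ X₁)
    (hΩlcomp : ∀ s r t : ℝ, 0 ≤ s → s ≤ r → r ≤ t → t ≤ T →
      Ωl t s = (Ωl t r).comp (Ωl r s))
    (MΩl : ℝ) (hΩlbdd : ∀ s t : ℝ, 0 ≤ s → s ≤ t → t ≤ T → ‖Ωl t s‖ ≤ MΩl)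
    (hΩlsc₁ : ∀ x : X₁, ∀ s ∈ Set.Icc 0 T, ContinuousOn (fun t => Ωl t s x) (Set.Icc s T))
    (hΩlsc₂ : ∀ x : X₁, ∀ t ∈ Set.Icc 0 T, ContinuousOn (fun s => Ωl t s x) (Set.Icc 0 t))
    (hΩleq : ∀ x : X₁, ∀ s t : ℝ, 0 ≤ s → s ≤ t → t ≤ T →
      Ωl t s x = Ul t s x - ∫ r in s..t, Ωl t r (Q1 r (Ul r s x)))
    -- the perturbed backward evolution family Ω⃗
    (Ωb : ℝ → ℝ → X₂ →L[ℝ] X₂)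
    (hΩbid : ∀ s ∈ Set.Icc 0 T, Ωb s s = ContinuousLinearMap.id ℝ X₂)
    (hΩbcomp : ∀ t r s : ℝ, 0 ≤ t → t ≤ r → r ≤ s → s ≤ T →
      Ωb t s = (Ωb t r).comp (Ωb r s))
    (MΩb : ℝ) (hΩbbdd : ∀ t s : ℝ, 0 ≤ t → t ≤ s → s ≤ T → ‖Ωb t s‖ ≤ MΩb)
    (hΩbsc₁ : ∀ y : X₂, ∀ s ∈ Set.Icc 0 T, ContinuousOn (fun t => Ωb t s y) (Set.Icc 0 s))
    (hΩbsc₂ : ∀ y : X₂, ∀ t ∈ Set.Icc 0 T, ContinuousOn (fun s => Ωb t s y) (Set.Icc t T))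
    (hΩbeq : ∀ y : X₂, ∀ t s : ℝ, 0 ≤ t → t ≤ s → s ≤ T →
      Ωb t s y = Ub t s y - ∫ r in t..s, Ub t r (Q2 r (Ωb r s y)))
    (G : X₁ →L[ℝ] X₂) :
    ∃ P : ℝ → X₁ →L[ℝ] X₂,
      (∀ x : X₁, ContinuousOn (fun t => P t x) (Set.Icc 0 T)) ∧
      -- P is given by the representation formula
      (∀ t ∈ Set.Icc 0 T, ∀ x : X₁,
        P t x = Ωb t T (G (Ωl T t x)) + ∫ r in t..T, Ωb t r (Q12 r (Ωl r t x))) ∧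
      -- P solves the linear integral equation
      (∀ t ∈ Set.Icc 0 T, ∀ x : X₁,
        P t x = Ub t T (G (Ul T t x)) +
          ∫ r in t..T, Ub t r (Q12 r (Ul r t x) - P r (Q1 r (Ul r t x)) - Q2 r (P r (Ul r t x)))) ∧
      -- and it is the unique strongly continuous solution
      (∀ Q : ℝ → X₁ →L[ℝ] X₂,
        (∀ x : X₁, ContinuousOn (fun t => Q t x) (Set.Icc 0 T)) →
        (∀ t ∈ Set.Icc 0 T, ∀ x : X₁,
          Q t x = Ub t T (G (Ul T t x)) +
            ∫ r in t..T, Ub t r (Q12 r (Ul r t x) - Q r (Q1 r (Ul r t x)) - Q2 r (Q r (Ul r t x)))) →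
        ∀ t ∈ Set.Icc 0 T, Q t = P t) := by
  classical
  obtain ⟨MQ12', hMQ12nn, hMQ12⟩ := aux_bs Q12 hQ12sc
  obtain ⟨MQ1', hMQ1nn, hMQ1⟩ := aux_bs Q1 hQ1sc
  obtain ⟨MQ2', hMQ2nn, hMQ2⟩ := aux_bs Q2 hQ2sc
  obtain ⟨Cb, hCbnn, hCb⟩ : ∃ C : ℝ, 0 ≤ C ∧
      ∀ t s : ℝ, 0 ≤ t → t ≤ s → s ≤ T → ‖Ωb t s‖ ≤ C :=
    ⟨max MΩb 0, le_max_right _ _, fun t s h1 h2 h3 =>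
      le_trans (hΩbbdd t s h1 h2 h3) (le_max_left _ _)⟩
  obtain ⟨Cl, hClnn, hCl⟩ : ∃ C : ℝ, 0 ≤ C ∧
      ∀ s t : ℝ, 0 ≤ s → s ≤ t → t ≤ T → ‖Ωl t s‖ ≤ C :=
    ⟨max MΩl 0, le_max_right _ _, fun s t h1 h2 h3 =>
      le_trans (hΩlbdd s t h1 h2 h3) (le_max_left _ _)⟩
  obtain ⟨CUb, hCUbnn, hCUb⟩ : ∃ C : ℝ, 0 ≤ C ∧
      ∀ t s : ℝ, 0 ≤ t → t ≤ s → s ≤ T → ‖Ub t s‖ ≤ C :=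
    ⟨max MUb 0, le_max_right _ _, fun t s h1 h2 h3 =>
      le_trans (hUbbdd t s h1 h2 h3) (le_max_left _ _)⟩
  obtain ⟨CUl, hCUlnn, hCUl⟩ : ∃ C : ℝ, 0 ≤ C ∧
      ∀ s t : ℝ, 0 ≤ s → s ≤ t → t ≤ T → ‖Ul t s‖ ≤ C :=
    ⟨max MUl 0, le_max_right _ _, fun s t h1 h2 h3 =>
      le_trans (hUlbdd s t h1 h2 h3) (le_max_left _ _)⟩
  have jΩb : ∀ z : X₂, ContinuousOn (fun p : ℝ × ℝ => Ωb p.1 p.2 z)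
      {p : ℝ × ℝ | 0 ≤ p.1 ∧ p.1 ≤ p.2 ∧ p.2 ≤ T} :=
    fun z => aux_joint_back hΩbid hΩbcomp hCb hΩbsc₁ hΩbsc₂ z
  have jΩl : ∀ z : X₁, ContinuousOn (fun p : ℝ × ℝ => Ωl p.1 p.2 z)
      {p : ℝ × ℝ | 0 ≤ p.2 ∧ p.2 ≤ p.1 ∧ p.1 ≤ T} :=
    fun z => aux_joint_fwd hΩlid hΩlcomp hCl hΩlsc₁ hΩlsc₂ z
  have hIcc : ∀ {t : ℝ}, t ∈ Icc (0:ℝ) T → Icc t T ⊆ Icc (0:ℝ) T :=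
    fun ht r hr => ⟨le_trans ht.1 hr.1, hr.2⟩
  -- continuity of the representation-formula integrand
  have hcont1 : ∀ t ∈ Icc (0:ℝ) T, ∀ x : X₁,
      ContinuousOn (fun r => Ωb t r (Q12 r (Ωl r t x))) (Icc t T) := by
    intro t ht x
    exact aux_apply_cont (A := fun r => Ωb t r) (M := Cb)
      (fun y => hΩbsc₂ y t ht) (fun r hr => hCb t r ht.1 hr.1 hr.2)
      (aux_apply_cont (A := Q12) (M := MQ12')
        (fun y => (hQ12sc y).mono (hIcc ht)) (fun r hr => hMQ12 r (hIcc ht hr))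
        (hΩlsc₁ x t ht))
  have hInt1 : ∀ t ∈ Icc (0:ℝ) T, ∀ x : X₁,
      IntervalIntegrable (fun r => Ωb t r (Q12 r (Ωl r t x))) MeasureTheory.volume t T := by
    intro t ht x
    apply ContinuousOn.intervalIntegrable
    rw [uIcc_of_le ht.2]
    exact hcont1 t ht x
  -- the representation formula, as a function
  set Pf : ℝ → X₁ → X₂ := fun t x =>
    Ωb t T (G (Ωl T t x)) + ∫ r in t..T, Ωb t r (Q12 r (Ωl r t x)) with hPfdef
  obtain ⟨CP, hCPnn, hCP⟩ : ∃ C : ℝ, 0 ≤ C ∧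
      ∀ t ∈ Icc (0:ℝ) T, ∀ x : X₁, ‖Pf t x‖ ≤ C * ‖x‖ := by
    refine ⟨Cb * ‖G‖ * Cl + T * (Cb * (MQ12' * Cl)), by positivity, ?_⟩
    intro t ht x
    have b1 : ‖Ωb t T (G (Ωl T t x))‖ ≤ Cb * ‖G‖ * Cl * ‖x‖ := by
      have i3 : ‖Ωl T t x‖ ≤ Cl * ‖x‖ :=
        le_trans ((Ωl T t).le_opNorm x)
          (mul_le_mul_of_nonneg_right (hCl t T ht.1 ht.2 le_rfl) (norm_nonneg x))
      have i2 : ‖G (Ωl T t x)‖ ≤ ‖G‖ * (Cl * ‖x‖) :=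
        le_trans (G.le_opNorm _)
          (mul_le_mul_of_nonneg_left i3 (norm_nonneg G))
      have i1 : ‖Ωb t T (G (Ωl T t x))‖ ≤ Cb * (‖G‖ * (Cl * ‖x‖)) :=
        le_trans ((Ωb t T).le_opNorm _)
          (mul_le_mul (hCb t T ht.1 ht.2 le_rfl) i2 (norm_nonneg _) hCbnn)
      calc ‖Ωb t T (G (Ωl T t x))‖ ≤ Cb * (‖G‖ * (Cl * ‖x‖)) := i1
        _ = Cb * ‖G‖ * Cl * ‖x‖ := by ring
    have b2 : ‖∫ r in t..T, Ωb t r (Q12 r (Ωl r t x))‖ ≤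
        Cb * (MQ12' * (Cl * ‖x‖)) * |T - t| := by
      apply intervalIntegral.norm_integral_le_of_norm_le_const
      intro r hr
      rw [Set.uIoc_of_le ht.2] at hr
      have hr1 : t ≤ r := le_of_lt hr.1
      have hr0 : 0 ≤ r := le_trans ht.1 hr1
      have i3 : ‖Ωl r t x‖ ≤ Cl * ‖x‖ :=
        le_trans ((Ωl r t).le_opNorm x)
          (mul_le_mul_of_nonneg_right (hCl t r ht.1 hr1 hr.2) (norm_nonneg x))
      have i2 : ‖Q12 r (Ωl r t x)‖ ≤ MQ12' * (Cl * ‖x‖) :=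
        le_trans ((Q12 r).le_opNorm _)
          (mul_le_mul (hMQ12 r ⟨hr0, hr.2⟩) i3 (norm_nonneg _) hMQ12nn)
      exact le_trans ((Ωb t r).le_opNorm _)
        (mul_le_mul (hCb t r ht.1 hr1 hr.2) i2 (norm_nonneg _) hCbnn)
    have habs : |T - t| ≤ T := by
      rw [abs_of_nonneg (by linarith [ht.2] : (0:ℝ) ≤ T - t)]
      linarith [ht.1]
    calc ‖Pf t x‖ ≤ ‖Ωb t T (G (Ωl T t x))‖ + ‖∫ r in t..T, Ωb t r (Q12 r (Ωl r t x))‖ :=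
          norm_add_le _ _
      _ ≤ Cb * ‖G‖ * Cl * ‖x‖ + Cb * (MQ12' * (Cl * ‖x‖)) * |T - t| := add_le_add b1 b2
      _ ≤ Cb * ‖G‖ * Cl * ‖x‖ + Cb * (MQ12' * (Cl * ‖x‖)) * T := by
          have : (0:ℝ) ≤ Cb * (MQ12' * (Cl * ‖x‖)) := by positivity
          nlinarith
      _ = (Cb * ‖G‖ * Cl + T * (Cb * (MQ12' * Cl))) * ‖x‖ := by ring
  -- package the formula into continuous linear maps
  have hPex : ∀ t : ℝ, ∃ A : X₁ →L[ℝ] X₂, ∀ _ : t ∈ Icc (0:ℝ) T, ∀ x : X₁, A x = Pf t x := by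
    intro t
    by_cases ht : t ∈ Icc (0:ℝ) T
    · have hadd : ∀ x y : X₁, Pf t (x + y) = Pf t x + Pf t y := by
        intro x y
        simp only [hPfdef, map_add]
        rw [intervalIntegral.integral_add (hInt1 t ht x) (hInt1 t ht y)]
        abel
      have hsmul : ∀ (c : ℝ) (x : X₁), Pf t (c • x) = c • Pf t x := by
        intro c x
        simp only [hPfdef, _root_.map_smul]
        rw [intervalIntegral.integral_smul, smul_add]
      refine ⟨LinearMap.mkContinuous
        ⟨⟨Pf t, hadd⟩, hsmul⟩ CP (fun x => hCP t ht x), fun _ x => rfl⟩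
    · exact ⟨0, fun h => absurd h ht⟩
  choose P hP using hPex
  have hPval : ∀ t ∈ Icc (0:ℝ) T, ∀ x : X₁,
      P t x = Ωb t T (G (Ωl T t x)) + ∫ r in t..T, Ωb t r (Q12 r (Ωl r t x)) :=
    fun t ht x => hP t ht x
  have hPop : ∀ r ∈ Icc (0:ℝ) T, ‖P r‖ ≤ CP := by
    intro r hr
    apply ContinuousLinearMap.opNorm_le_bound _ hCPnn
    intro x
    rw [hP r hr x]
    exact hCP r hr x
  have hPcont : ∀ x : X₁, ContinuousOn (fun t => P t x) (Icc 0 T) := by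
    intro x
    have h1 : ContinuousOn (fun t => Ωb t T (G (Ωl T t x))) (Icc 0 T) :=
      aux_apply_cont (A := fun t => Ωb t T) (M := Cb)
        (fun y => hΩbsc₁ y T ⟨hT, le_rfl⟩)
        (fun t ht => hCb t T ht.1 ht.2 le_rfl)
        (G.continuous.comp_continuousOn (hΩlsc₂ x T ⟨hT, le_rfl⟩))
    have hjoint : ContinuousOn (fun p : ℝ × ℝ => Ωb p.1 p.2 (Q12 p.2 (Ωl p.2 p.1 x)))
        {p : ℝ × ℝ | 0 ≤ p.1 ∧ p.1 ≤ p.2 ∧ p.2 ≤ T} := by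
      apply aux_apply_cont (A := fun p : ℝ × ℝ => Ωb p.1 p.2) (M := Cb) jΩb
        (fun p hp => hCb p.1 p.2 hp.1 hp.2.1 hp.2.2)
      apply aux_apply_cont (A := fun p : ℝ × ℝ => Q12 p.2) (M := MQ12')
        (fun y => (hQ12sc y).comp continuous_snd.continuousOn
          (fun p hp => ⟨le_trans hp.1 hp.2.1, hp.2.2⟩))
        (fun p hp => hMQ12 p.2 ⟨le_trans hp.1 hp.2.1, hp.2.2⟩)
      exact (jΩl x).comp continuous_swap.continuousOn
        (fun p hp => ⟨hp.1, hp.2.1, hp.2.2⟩)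
    have h2 := aux_cont_param (f := fun t r => Ωb t r (Q12 r (Ωl r t x))) hT hjoint
    exact (h1.add h2).congr (fun t ht => hPval t ht x)
  -- Step 1: P also solves the equation with `Ωl` replaced by `Ul` (perturbation `Q1` moved out)
  have hstar : ∀ t ∈ Icc (0:ℝ) T, ∀ x : X₁, P t x =
      Ωb t T (G (Ul T t x)) +
        ∫ r in t..T, Ωb t r (Q12 r (Ul r t x) - P r (Q1 r (Ul r t x))) := by
    intro t ht x
    have htT : t ≤ T := ht.2
    -- continuity of s ↦ Q1 s (Ul s t x)
    have uw : ContinuousOn (fun s => Q1 s (Ul s t x)) (Icc t T) :=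
      aux_apply_cont (A := Q1) (M := MQ1')
        (fun y => (hQ1sc y).mono (hIcc ht)) (fun s hs => hMQ1 s (hIcc ht hs))
        (hUlsc₁ x t ht)
    have intA : IntervalIntegrable (fun r => Ωl T r (Q1 r (Ul r t x)))
        MeasureTheory.volume t T := by
      apply ContinuousOn.intervalIntegrable
      rw [uIcc_of_le htT]
      exact aux_apply_cont (A := fun r => Ωl T r) (M := Cl)
        (fun y => (hΩlsc₂ y T ⟨hT, le_rfl⟩).mono (hIcc ht))
        (fun r hr => hCl r T (le_trans ht.1 hr.1) hr.2 le_rfl) uw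
    have intInner : ∀ r ∈ Icc t T,
        IntervalIntegrable (fun s => Ωl r s (Q1 s (Ul s t x))) MeasureTheory.volume t r := by
      intro r hr
      apply ContinuousOn.intervalIntegrable
      rw [uIcc_of_le hr.1]
      exact aux_apply_cont (A := fun s => Ωl r s) (M := Cl)
        (fun y => (hΩlsc₂ y r ⟨le_trans ht.1 hr.1, hr.2⟩).mono
          (fun s hs => ⟨le_trans ht.1 hs.1, hs.2⟩))
        (fun s hs => hCl s r (le_trans ht.1 hs.1) hs.2 hr.2)
        (uw.mono (fun s hs => ⟨hs.1, le_trans hs.2 hr.2⟩))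
    have intB1 : IntervalIntegrable (fun r => Ωb t r (Q12 r (Ul r t x)))
        MeasureTheory.volume t T := by
      apply ContinuousOn.intervalIntegrable
      rw [uIcc_of_le htT]
      exact aux_apply_cont (A := fun r => Ωb t r) (M := Cb)
        (fun y => hΩbsc₂ y t ht) (fun r hr => hCb t r ht.1 hr.1 hr.2)
        (aux_apply_cont (A := Q12) (M := MQ12')
          (fun y => (hQ12sc y).mono (hIcc ht)) (fun r hr => hMQ12 r (hIcc ht hr))
          (hUlsc₁ x t ht))
    -- joint continuity of (s, r) ↦ Ωb t r (Q12 r (Ωl r s (Q1 s (Ul s t x))))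
    have hjsr : ContinuousOn
        (fun p : ℝ × ℝ => Ωb t p.2 (Q12 p.2 (Ωl p.2 p.1 (Q1 p.1 (Ul p.1 t x)))))
        {p : ℝ × ℝ | t ≤ p.1 ∧ p.1 ≤ p.2 ∧ p.2 ≤ T} := by
      apply aux_apply_cont (A := fun p : ℝ × ℝ => Ωb t p.2) (M := Cb)
        (fun y => (hΩbsc₂ y t ht).comp continuous_snd.continuousOn
          (fun p hp => ⟨le_trans hp.1 hp.2.1, hp.2.2⟩))
        (fun p hp => hCb t p.2 ht.1 (le_trans hp.1 hp.2.1) hp.2.2)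
      apply aux_apply_cont (A := fun p : ℝ × ℝ => Q12 p.2) (M := MQ12')
        (fun y => (hQ12sc y).comp continuous_snd.continuousOn
          (fun p hp => ⟨le_trans ht.1 (le_trans hp.1 hp.2.1), hp.2.2⟩))
        (fun p hp => hMQ12 p.2 ⟨le_trans ht.1 (le_trans hp.1 hp.2.1), hp.2.2⟩)
      apply aux_apply_cont (A := fun p : ℝ × ℝ => Ωl p.2 p.1) (M := Cl)
        (fun z => (jΩl z).comp continuous_swap.continuousOn
          (fun p hp => ⟨le_trans ht.1 hp.1, hp.2.1, hp.2.2⟩))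
        (fun p hp => hCl p.1 p.2 (le_trans ht.1 hp.1) hp.2.1 hp.2.2)
      exact uw.comp continuous_fst.continuousOn
        (fun p hp => ⟨hp.1, le_trans hp.2.1 hp.2.2⟩)
    have intB2 : IntervalIntegrable
        (fun r => ∫ s in t..r, Ωb t r (Q12 r (Ωl r s (Q1 s (Ul s t x)))))
        MeasureTheory.volume t T := by
      apply ContinuousOn.intervalIntegrable
      rw [uIcc_of_le htT]
      apply aux_cont_param'
        (g := fun r s => Ωb t r (Q12 r (Ωl r s (Q1 s (Ul s t x))))) htT
      exact hjsr.comp continuous_swap.continuousOn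
        (fun p hp => ⟨hp.1, hp.2.1, hp.2.2⟩)
    have intJ1 : IntervalIntegrable (fun s => Ωb t s (P s (Q1 s (Ul s t x))))
        MeasureTheory.volume t T := by
      apply ContinuousOn.intervalIntegrable
      rw [uIcc_of_le htT]
      exact aux_apply_cont (A := fun s => Ωb t s) (M := Cb)
        (fun y => hΩbsc₂ y t ht) (fun s hs => hCb t s ht.1 hs.1 hs.2)
        (aux_apply_cont (A := P) (M := CP)
          (fun y => (hPcont y).mono (hIcc ht)) (fun s hs => hPop s (hIcc ht hs)) uw)
    have intJ2 : IntervalIntegrable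
        (fun s => Ωb t s (Ωb s T (G (Ωl T s (Q1 s (Ul s t x))))))
        MeasureTheory.volume t T := by
      apply ContinuousOn.intervalIntegrable
      rw [uIcc_of_le htT]
      exact aux_apply_cont (A := fun s => Ωb t s) (M := Cb)
        (fun y => hΩbsc₂ y t ht) (fun s hs => hCb t s ht.1 hs.1 hs.2)
        (aux_apply_cont (A := fun s => Ωb s T) (M := Cb)
          (fun y => (hΩbsc₁ y T ⟨hT, le_rfl⟩).mono (hIcc ht))
          (fun s hs => hCb s T (le_trans ht.1 hs.1) hs.2 le_rfl)
          (G.continuous.comp_continuousOn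
            (aux_apply_cont (A := fun s => Ωl T s) (M := Cl)
              (fun y => (hΩlsc₂ y T ⟨hT, le_rfl⟩).mono (hIcc ht))
              (fun s hs => hCl s T (le_trans ht.1 hs.1) hs.2 le_rfl) uw)))
    -- expand the `G`-term
    have eA : Ωb t T (G (Ωl T t x)) =
        Ωb t T (G (Ul T t x)) -
          ∫ r in t..T, Ωb t T (G (Ωl T r (Q1 r (Ul r t x)))) := by
      have h0 := hΩleq x t T ht.1 htT le_rfl
      have h1 := ((Ωb t T).comp G).intervalIntegral_comp_comm intA
      simp only [ContinuousLinearMap.comp_apply] at h1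
      rw [h0, map_sub, map_sub, ← h1]
    have eA2 : (∫ r in t..T, Ωb t T (G (Ωl T r (Q1 r (Ul r t x))))) =
        ∫ r in t..T, Ωb t r (Ωb r T (G (Ωl T r (Q1 r (Ul r t x))))) := by
      apply intervalIntegral.integral_congr
      intro r hr
      rw [uIcc_of_le htT] at hr
      dsimp only
      rw [hΩbcomp t r T ht.1 hr.1 hr.2 le_rfl]
      rfl
    -- expand the integral term
    have eB : (∫ r in t..T, Ωb t r (Q12 r (Ωl r t x))) =
        (∫ r in t..T, Ωb t r (Q12 r (Ul r t x))) -
          ∫ r in t..T, ∫ s in t..r, Ωb t r (Q12 r (Ωl r s (Q1 s (Ul s t x)))) := by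
      have hpt : Set.EqOn (fun r => Ωb t r (Q12 r (Ωl r t x)))
          (fun r => Ωb t r (Q12 r (Ul r t x)) -
            ∫ s in t..r, Ωb t r (Q12 r (Ωl r s (Q1 s (Ul s t x)))))
          (Set.uIcc t T) := by
        intro r hr
        rw [uIcc_of_le htT] at hr
        dsimp only
        have h0 := hΩleq x t r ht.1 hr.1 hr.2
        have h1 := ((Ωb t r).comp (Q12 r)).intervalIntegral_comp_comm (intInner r hr)
        simp only [ContinuousLinearMap.comp_apply] at h1
        rw [h0, map_sub, map_sub, ← h1]
      rw [intervalIntegral.integral_congr hpt]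
      exact intervalIntegral.integral_sub intB1 intB2
    -- Fubini
    have eF := aux_fubini
      (f := fun s r => Ωb t r (Q12 r (Ωl r s (Q1 s (Ul s t x))))) htT hjsr
    -- the inner integral after Fubini
    have eSint : (∫ s in t..T, ∫ r in s..T, Ωb t r (Q12 r (Ωl r s (Q1 s (Ul s t x))))) =
        (∫ s in t..T, Ωb t s (P s (Q1 s (Ul s t x)))) -
          ∫ s in t..T, Ωb t s (Ωb s T (G (Ωl T s (Q1 s (Ul s t x))))) := by
      rw [← intervalIntegral.integral_sub intJ1 intJ2]
      apply intervalIntegral.integral_congr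
      intro s hs
      rw [uIcc_of_le htT] at hs
      dsimp only
      have hs0 : (0:ℝ) ≤ s := le_trans ht.1 hs.1
      have e1 : Set.EqOn
          (fun r => Ωb t r (Q12 r (Ωl r s (Q1 s (Ul s t x)))))
          (fun r => Ωb t s (Ωb s r (Q12 r (Ωl r s (Q1 s (Ul s t x))))))
          (Set.uIcc s T) := by
        intro r hr
        rw [uIcc_of_le hs.2] at hr
        dsimp only
        rw [hΩbcomp t s r ht.1 hs.1 hr.1 hr.2]
        rfl
      rw [intervalIntegral.integral_congr e1]
      rw [(Ωb t s).intervalIntegral_comp_comm (hInt1 s ⟨hs0, hs.2⟩ (Q1 s (Ul s t x)))]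
      have e2 : (∫ r in s..T, Ωb s r (Q12 r (Ωl r s (Q1 s (Ul s t x))))) =
          P s (Q1 s (Ul s t x)) - Ωb s T (G (Ωl T s (Q1 s (Ul s t x)))) := by
        rw [hPval s ⟨hs0, hs.2⟩ (Q1 s (Ul s t x))]
        abel
      rw [e2, map_sub]
    -- combine the two integrals at the end
    have efinal : (∫ r in t..T, Ωb t r (Q12 r (Ul r t x))) -
        (∫ s in t..T, Ωb t s (P s (Q1 s (Ul s t x)))) =
        ∫ r in t..T, Ωb t r (Q12 r (Ul r t x) - P r (Q1 r (Ul r t x))) := by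
      rw [← intervalIntegral.integral_sub intB1 intJ1]
      apply intervalIntegral.integral_congr
      intro r _
      dsimp only
      rw [map_sub]
    calc P t x = Ωb t T (G (Ωl T t x)) + ∫ r in t..T, Ωb t r (Q12 r (Ωl r t x)) :=
          hPval t ht x
      _ = (Ωb t T (G (Ul T t x)) -
            ∫ r in t..T, Ωb t r (Ωb r T (G (Ωl T r (Q1 r (Ul r t x)))))) +
          ((∫ r in t..T, Ωb t r (Q12 r (Ul r t x))) -
            ∫ r in t..T, ∫ s in t..r, Ωb t r (Q12 r (Ωl r s (Q1 s (Ul s t x))))) := by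
          rw [eA, eA2, eB]
      _ = (Ωb t T (G (Ul T t x)) -
            ∫ r in t..T, Ωb t r (Ωb r T (G (Ωl T r (Q1 r (Ul r t x)))))) +
          ((∫ r in t..T, Ωb t r (Q12 r (Ul r t x))) -
            ((∫ s in t..T, Ωb t s (P s (Q1 s (Ul s t x)))) -
              ∫ s in t..T, Ωb t s (Ωb s T (G (Ωl T s (Q1 s (Ul s t x))))))) := by
          rw [eF, eSint]
      _ = Ωb t T (G (Ul T t x)) +
          ((∫ r in t..T, Ωb t r (Q12 r (Ul r t x))) -
            ∫ s in t..T, Ωb t s (P s (Q1 s (Ul s t x)))) := by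
          abel
      _ = Ωb t T (G (Ul T t x)) +
          ∫ r in t..T, Ωb t r (Q12 r (Ul r t x) - P r (Q1 r (Ul r t x))) := by
          rw [efinal]
  -- Step 2: P solves the equation with both perturbations moved out
  have hsolve : ∀ t ∈ Icc (0:ℝ) T, ∀ x : X₁, P t x =
      Ub t T (G (Ul T t x)) +
        ∫ r in t..T, Ub t r (Q12 r (Ul r t x) - P r (Q1 r (Ul r t x)) -
          Q2 r (P r (Ul r t x))) := by
    intro t ht x
    have htT : t ≤ T := ht.2
    -- continuity of r ↦ Q12 r (Ul r t x) - P r (Q1 r (Ul r t x))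
    have czz : ContinuousOn
        (fun r => Q12 r (Ul r t x) - P r (Q1 r (Ul r t x))) (Icc t T) := by
      apply ContinuousOn.sub
      · exact aux_apply_cont (A := Q12) (M := MQ12')
          (fun y => (hQ12sc y).mono (hIcc ht)) (fun r hr => hMQ12 r (hIcc ht hr))
          (hUlsc₁ x t ht)
      · exact aux_apply_cont (A := P) (M := CP)
          (fun y => (hPcont y).mono (hIcc ht)) (fun s hs => hPop s (hIcc ht hs))
          (aux_apply_cont (A := Q1) (M := MQ1')
            (fun y => (hQ1sc y).mono (hIcc ht)) (fun s hs => hMQ1 s (hIcc ht hs))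
            (hUlsc₁ x t ht))
    have intZ : IntervalIntegrable
        (fun r => Ub t r (Q12 r (Ul r t x) - P r (Q1 r (Ul r t x))))
        MeasureTheory.volume t T := by
      apply ContinuousOn.intervalIntegrable
      rw [uIcc_of_le htT]
      exact aux_apply_cont (A := fun r => Ub t r) (M := CUb)
        (fun y => hUbsc₂ y t ht) (fun r hr => hCUb t r ht.1 hr.1 hr.2) czz
    -- joint continuity of (s, r) ↦ Ub t s (Q2 s (Ωb s r (zz r)))
    have hjsr2 : ContinuousOn
        (fun p : ℝ × ℝ => Ub t p.1 (Q2 p.1 (Ωb p.1 p.2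
          (Q12 p.2 (Ul p.2 t x) - P p.2 (Q1 p.2 (Ul p.2 t x))))))
        {p : ℝ × ℝ | t ≤ p.1 ∧ p.1 ≤ p.2 ∧ p.2 ≤ T} := by
      apply aux_apply_cont (A := fun p : ℝ × ℝ => Ub t p.1) (M := CUb)
        (fun y => (hUbsc₂ y t ht).comp continuous_fst.continuousOn
          (fun p hp => ⟨hp.1, le_trans hp.2.1 hp.2.2⟩))
        (fun p hp => hCUb t p.1 ht.1 hp.1 (le_trans hp.2.1 hp.2.2))
      apply aux_apply_cont (A := fun p : ℝ × ℝ => Q2 p.1) (M := MQ2')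
        (fun y => (hQ2sc y).comp continuous_fst.continuousOn
          (fun p hp => ⟨le_trans ht.1 hp.1, le_trans hp.2.1 hp.2.2⟩))
        (fun p hp => hMQ2 p.1 ⟨le_trans ht.1 hp.1, le_trans hp.2.1 hp.2.2⟩)
      apply aux_apply_cont (A := fun p : ℝ × ℝ => Ωb p.1 p.2) (M := Cb)
        (fun z => (jΩb z).mono (fun p hp => ⟨le_trans ht.1 hp.1, hp.2.1, hp.2.2⟩))
        (fun p hp => hCb p.1 p.2 (le_trans ht.1 hp.1) hp.2.1 hp.2.2)
      exact czz.comp continuous_snd.continuousOn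
        (fun p hp => ⟨le_trans hp.1 hp.2.1, hp.2.2⟩)
    have intK : IntervalIntegrable
        (fun r => ∫ s in t..r, Ub t s (Q2 s (Ωb s r
          (Q12 r (Ul r t x) - P r (Q1 r (Ul r t x))))))
        MeasureTheory.volume t T := by
      apply ContinuousOn.intervalIntegrable
      rw [uIcc_of_le htT]
      apply aux_cont_param'
        (g := fun r s => Ub t s (Q2 s (Ωb s r
          (Q12 r (Ul r t x) - P r (Q1 r (Ul r t x)))))) htT
      exact hjsr2.comp continuous_swap.continuousOn
        (fun p hp => ⟨hp.1, hp.2.1, hp.2.2⟩)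
    have intK1 : IntervalIntegrable (fun s => Ub t s (Q2 s (P s (Ul s t x))))
        MeasureTheory.volume t T := by
      apply ContinuousOn.intervalIntegrable
      rw [uIcc_of_le htT]
      exact aux_apply_cont (A := fun s => Ub t s) (M := CUb)
        (fun y => hUbsc₂ y t ht) (fun s hs => hCUb t s ht.1 hs.1 hs.2)
        (aux_apply_cont (A := Q2) (M := MQ2')
          (fun y => (hQ2sc y).mono (hIcc ht)) (fun s hs => hMQ2 s (hIcc ht hs))
          (aux_apply_cont (A := P) (M := CP)
            (fun y => (hPcont y).mono (hIcc ht)) (fun s hs => hPop s (hIcc ht hs))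
            (hUlsc₁ x t ht)))
    have intK2 : IntervalIntegrable
        (fun s => Ub t s (Q2 s (Ωb s T (G (Ul T t x)))))
        MeasureTheory.volume t T := by
      apply ContinuousOn.intervalIntegrable
      rw [uIcc_of_le htT]
      exact aux_apply_cont (A := fun s => Ub t s) (M := CUb)
        (fun y => hUbsc₂ y t ht) (fun s hs => hCUb t s ht.1 hs.1 hs.2)
        (aux_apply_cont (A := Q2) (M := MQ2')
          (fun y => (hQ2sc y).mono (hIcc ht)) (fun s hs => hMQ2 s (hIcc ht hs))
          (aux_apply_cont (A := fun s => Ωb s T) (M := Cb)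
            (fun y => (hΩbsc₁ y T ⟨hT, le_rfl⟩).mono (hIcc ht))
            (fun s hs => hCb s T (le_trans ht.1 hs.1) hs.2 le_rfl)
            continuousOn_const))
    -- expand the `G`-term via the Ωb integral equation
    have e1 := hΩbeq (G (Ul T t x)) t T ht.1 htT le_rfl
    -- expand the integral term via the Ωb integral equation
    have e2 : (∫ r in t..T, Ωb t r (Q12 r (Ul r t x) - P r (Q1 r (Ul r t x)))) =
        (∫ r in t..T, Ub t r (Q12 r (Ul r t x) - P r (Q1 r (Ul r t x)))) -
          ∫ r in t..T, ∫ s in t..r, Ub t s (Q2 s (Ωb s r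
            (Q12 r (Ul r t x) - P r (Q1 r (Ul r t x))))) := by
      have hpt : Set.EqOn
          (fun r => Ωb t r (Q12 r (Ul r t x) - P r (Q1 r (Ul r t x))))
          (fun r => Ub t r (Q12 r (Ul r t x) - P r (Q1 r (Ul r t x))) -
            ∫ s in t..r, Ub t s (Q2 s (Ωb s r
              (Q12 r (Ul r t x) - P r (Q1 r (Ul r t x))))))
          (Set.uIcc t T) := by
        intro r hr
        rw [uIcc_of_le htT] at hr
        dsimp only
        exact hΩbeq (Q12 r (Ul r t x) - P r (Q1 r (Ul r t x))) t r ht.1 hr.1 hr.2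
      rw [intervalIntegral.integral_congr hpt]
      exact intervalIntegral.integral_sub intZ intK
    -- Fubini
    have eF2 := aux_fubini
      (f := fun s r => Ub t s (Q2 s (Ωb s r
        (Q12 r (Ul r t x) - P r (Q1 r (Ul r t x)))))) htT hjsr2
    -- the inner integral after Fubini
    have eS2 : (∫ s in t..T, ∫ r in s..T, Ub t s (Q2 s (Ωb s r
          (Q12 r (Ul r t x) - P r (Q1 r (Ul r t x)))))) =
        (∫ s in t..T, Ub t s (Q2 s (P s (Ul s t x)))) -
          ∫ s in t..T, Ub t s (Q2 s (Ωb s T (G (Ul T t x)))) := by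
      rw [← intervalIntegral.integral_sub intK1 intK2]
      apply intervalIntegral.integral_congr
      intro s hs
      rw [uIcc_of_le htT] at hs
      dsimp only
      have hs0 : (0:ℝ) ≤ s := le_trans ht.1 hs.1
      have intΩz : IntervalIntegrable
          (fun r => Ωb s r (Q12 r (Ul r t x) - P r (Q1 r (Ul r t x))))
          MeasureTheory.volume s T := by
        apply ContinuousOn.intervalIntegrable
        rw [uIcc_of_le hs.2]
        exact aux_apply_cont (A := fun r => Ωb s r) (M := Cb)
          (fun y => hΩbsc₂ y s ⟨hs0, hs.2⟩)
          (fun r hr => hCb s r hs0 hr.1 hr.2)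
          (czz.mono (fun r hr => ⟨le_trans hs.1 hr.1, hr.2⟩))
      have h1 := ((Ub t s).comp (Q2 s)).intervalIntegral_comp_comm intΩz
      simp only [ContinuousLinearMap.comp_apply] at h1
      rw [h1]
      -- identify the inner integral via hstar at s
      have hTT : Ul T s (Ul s t x) = Ul T t x := by
        rw [hUlcomp t s T ht.1 hs.1 hs.2 le_rfl]; rfl
      have hst := hstar s ⟨hs0, hs.2⟩ (Ul s t x)
      rw [hTT] at hst
      have hrepl : (∫ r in s..T, Ωb s r (Q12 r (Ul r s (Ul s t x)) -
          P r (Q1 r (Ul r s (Ul s t x))))) =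
          ∫ r in s..T, Ωb s r (Q12 r (Ul r t x) - P r (Q1 r (Ul r t x))) := by
        apply intervalIntegral.integral_congr
        intro r hr
        rw [uIcc_of_le hs.2] at hr
        dsimp only
        rw [hUlcomp t s r ht.1 hs.1 hr.1 hr.2]
        rfl
      rw [hrepl] at hst
      have e5 : (∫ r in s..T, Ωb s r (Q12 r (Ul r t x) - P r (Q1 r (Ul r t x)))) =
          P s (Ul s t x) - Ωb s T (G (Ul T t x)) := by
        rw [hst]; abel
      rw [e5, map_sub, map_sub]
    -- combine the two integrals at the end
    have efinal2 : (∫ r in t..T, Ub t r (Q12 r (Ul r t x) - P r (Q1 r (Ul r t x)))) -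
        (∫ s in t..T, Ub t s (Q2 s (P s (Ul s t x)))) =
        ∫ r in t..T, Ub t r (Q12 r (Ul r t x) - P r (Q1 r (Ul r t x)) -
          Q2 r (P r (Ul r t x))) := by
      rw [← intervalIntegral.integral_sub intZ intK1]
      apply intervalIntegral.integral_congr
      intro r _
      dsimp only
      rw [← map_sub]
    calc P t x = Ωb t T (G (Ul T t x)) +
          ∫ r in t..T, Ωb t r (Q12 r (Ul r t x) - P r (Q1 r (Ul r t x))) :=
          hstar t ht x
      _ = (Ub t T (G (Ul T t x)) -
            ∫ s in t..T, Ub t s (Q2 s (Ωb s T (G (Ul T t x))))) +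
          ((∫ r in t..T, Ub t r (Q12 r (Ul r t x) - P r (Q1 r (Ul r t x)))) -
            ∫ r in t..T, ∫ s in t..r, Ub t s (Q2 s (Ωb s r
              (Q12 r (Ul r t x) - P r (Q1 r (Ul r t x)))))) := by
          rw [e1, e2]
      _ = (Ub t T (G (Ul T t x)) -
            ∫ s in t..T, Ub t s (Q2 s (Ωb s T (G (Ul T t x))))) +
          ((∫ r in t..T, Ub t r (Q12 r (Ul r t x) - P r (Q1 r (Ul r t x)))) -
            ((∫ s in t..T, Ub t s (Q2 s (P s (Ul s t x)))) -
              ∫ s in t..T, Ub t s (Q2 s (Ωb s T (G (Ul T t x)))))) := by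
          rw [eF2, eS2]
      _ = Ub t T (G (Ul T t x)) +
          ((∫ r in t..T, Ub t r (Q12 r (Ul r t x) - P r (Q1 r (Ul r t x)))) -
            ∫ s in t..T, Ub t s (Q2 s (P s (Ul s t x)))) := by
          abel
      _ = Ub t T (G (Ul T t x)) +
          ∫ r in t..T, Ub t r (Q12 r (Ul r t x) - P r (Q1 r (Ul r t x)) -
            Q2 r (P r (Ul r t x))) := by
          rw [efinal2]
  -- continuity of the solution integrand, for an arbitrary strongly continuous family
  have hsolcont : ∀ (R : ℝ → X₁ →L[ℝ] X₂) (MR : ℝ),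
      (∀ y : X₁, ContinuousOn (fun r => R r y) (Icc 0 T)) →
      (∀ r ∈ Icc (0:ℝ) T, ‖R r‖ ≤ MR) →
      ∀ t ∈ Icc (0:ℝ) T, ∀ x : X₁, ContinuousOn
        (fun r => Ub t r (Q12 r (Ul r t x) - R r (Q1 r (Ul r t x)) -
          Q2 r (R r (Ul r t x)))) (Icc t T) := by
    intro R MR hRc hRb t ht x
    apply aux_apply_cont (A := fun r => Ub t r) (M := CUb)
      (fun y => hUbsc₂ y t ht) (fun r hr => hCUb t r ht.1 hr.1 hr.2)
    apply ContinuousOn.sub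
    apply ContinuousOn.sub
    · exact aux_apply_cont (A := Q12) (M := MQ12')
        (fun y => (hQ12sc y).mono (hIcc ht)) (fun r hr => hMQ12 r (hIcc ht hr))
        (hUlsc₁ x t ht)
    · exact aux_apply_cont (A := R) (M := MR)
        (fun y => (hRc y).mono (hIcc ht)) (fun s hs => hRb s (hIcc ht hs))
        (aux_apply_cont (A := Q1) (M := MQ1')
          (fun y => (hQ1sc y).mono (hIcc ht)) (fun s hs => hMQ1 s (hIcc ht hs))
          (hUlsc₁ x t ht))
    · exact aux_apply_cont (A := Q2) (M := MQ2')
        (fun y => (hQ2sc y).mono (hIcc ht)) (fun s hs => hMQ2 s (hIcc ht hs))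
        (aux_apply_cont (A := R) (M := MR)
          (fun y => (hRc y).mono (hIcc ht)) (fun s hs => hRb s (hIcc ht hs))
          (hUlsc₁ x t ht))
  refine ⟨P, hPcont, hPval, hsolve, ?_⟩
  intro Q hQcont hQeq
  have hDcont : ∀ y : X₁, ContinuousOn (fun r => (Q r - P r) y) (Icc 0 T) := by
    intro y
    have h := (hQcont y).sub (hPcont y)
    exact h.congr (fun r _ => by rw [ContinuousLinearMap.sub_apply]; rfl)
  obtain ⟨MD, hMDnn, hMD⟩ := aux_bs (fun r => Q r - P r) hDcont
  obtain ⟨MQop, hMQopnn, hMQop⟩ := aux_bs Q hQcont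
  -- the difference satisfies a homogeneous linear integral equation
  have hDeq : ∀ t ∈ Icc (0:ℝ) T, ∀ x : X₁, (Q t - P t) x =
      -∫ r in t..T, Ub t r ((Q r - P r) (Q1 r (Ul r t x)) +
        Q2 r ((Q r - P r) (Ul r t x))) := by
    intro t ht x
    have htT := ht.2
    have intP : IntervalIntegrable
        (fun r => Ub t r (Q12 r (Ul r t x) - P r (Q1 r (Ul r t x)) -
          Q2 r (P r (Ul r t x)))) MeasureTheory.volume t T := by
      apply ContinuousOn.intervalIntegrable
      rw [uIcc_of_le htT]
      exact hsolcont P CP hPcont hPop t ht x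
    have intQ : IntervalIntegrable
        (fun r => Ub t r (Q12 r (Ul r t x) - Q r (Q1 r (Ul r t x)) -
          Q2 r (Q r (Ul r t x)))) MeasureTheory.volume t T := by
      apply ContinuousOn.intervalIntegrable
      rw [uIcc_of_le htT]
      exact hsolcont Q MQop hQcont hMQop t ht x
    have h1 : (Q t - P t) x =
        (∫ r in t..T, Ub t r (Q12 r (Ul r t x) - Q r (Q1 r (Ul r t x)) -
          Q2 r (Q r (Ul r t x)))) -
        ∫ r in t..T, Ub t r (Q12 r (Ul r t x) - P r (Q1 r (Ul r t x)) -
          Q2 r (P r (Ul r t x))) := by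
      rw [ContinuousLinearMap.sub_apply, hQeq t ht x, hsolve t ht x]
      abel
    rw [h1, ← intervalIntegral.integral_sub intQ intP, ← intervalIntegral.integral_neg]
    apply intervalIntegral.integral_congr
    intro r _
    dsimp only
    rw [← map_sub, ← map_neg]
    congr 1
    simp only [ContinuousLinearMap.sub_apply, map_sub]
    abel
  -- iterate the homogeneous equation
  obtain ⟨K, hKnn, hK⟩ : ∃ K : ℝ, 0 ≤ K ∧ K = CUb * (CUl * (MQ1' + MQ2')) :=
    ⟨_, by positivity, rfl⟩
  have hiter : ∀ n : ℕ, ∀ t ∈ Icc (0:ℝ) T, ∀ x : X₁,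
      ‖(Q t - P t) x‖ ≤ MD * (K * (T - t))^n / n.factorial * ‖x‖ := by
    intro n
    induction n with
    | zero =>
      intro t ht x
      simp only [pow_zero, Nat.factorial_zero, Nat.cast_one, mul_one, div_one]
      exact le_trans ((Q t - P t).le_opNorm x)
        (mul_le_mul_of_nonneg_right (hMD t ht) (norm_nonneg x))
    | succ n ih =>
      intro t ht x
      have htT := ht.2
      have hTt : (0:ℝ) ≤ T - t := by linarith
      rw [hDeq t ht x, norm_neg]
      have hgint : IntervalIntegrable
          (fun r => (MD * K^(n+1) * ‖x‖ / (n.factorial : ℝ)) * (T - r)^n)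
          MeasureTheory.volume t T :=
        (continuous_const.mul ((continuous_const.sub continuous_id).pow n)).intervalIntegrable t T
      have hae : ∀ᵐ r ∂(MeasureTheory.volume.restrict (Set.uIoc t T)),
          ‖Ub t r ((Q r - P r) (Q1 r (Ul r t x)) + Q2 r ((Q r - P r) (Ul r t x)))‖ ≤
            (MD * K^(n+1) * ‖x‖ / (n.factorial : ℝ)) * (T - r)^n := by
        apply MeasureTheory.ae_restrict_of_forall_mem measurableSet_uIoc
        intro r hr
        rw [Set.uIoc_of_le htT] at hr
        have hr1 : t ≤ r := le_of_lt hr.1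
        have hr0 : (0:ℝ) ≤ r := le_trans ht.1 hr1
        have hrT : r ≤ T := hr.2
        have hBnn : (0:ℝ) ≤ MD * (K * (T - r))^n / n.factorial :=
          div_nonneg (mul_nonneg hMDnn (pow_nonneg
            (mul_nonneg hKnn (by linarith)) n)) (Nat.cast_nonneg _)
        have hu : ‖Ul r t x‖ ≤ CUl * ‖x‖ :=
          le_trans ((Ul r t).le_opNorm x)
            (mul_le_mul_of_nonneg_right (hCUl t r ht.1 hr1 hrT) (norm_nonneg x))
        have hy1 : ‖Q1 r (Ul r t x)‖ ≤ MQ1' * (CUl * ‖x‖) :=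
          le_trans ((Q1 r).le_opNorm _)
            (mul_le_mul (hMQ1 r ⟨hr0, hrT⟩) hu (norm_nonneg _) hMQ1nn)
        have hih1 : ‖(Q r - P r) (Q1 r (Ul r t x))‖ ≤
            MD * (K * (T - r))^n / n.factorial * (MQ1' * (CUl * ‖x‖)) :=
          le_trans (ih r ⟨hr0, hrT⟩ (Q1 r (Ul r t x)))
            (mul_le_mul_of_nonneg_left hy1 hBnn)
        have hih2 : ‖Q2 r ((Q r - P r) (Ul r t x))‖ ≤
            MQ2' * (MD * (K * (T - r))^n / n.factorial * (CUl * ‖x‖)) :=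
          le_trans ((Q2 r).le_opNorm _)
            (mul_le_mul (hMQ2 r ⟨hr0, hrT⟩)
              (le_trans (ih r ⟨hr0, hrT⟩ (Ul r t x))
                (mul_le_mul_of_nonneg_left hu hBnn))
              (norm_nonneg _) hMQ2nn)
        have hsum : ‖(Q r - P r) (Q1 r (Ul r t x)) + Q2 r ((Q r - P r) (Ul r t x))‖ ≤
            MD * (K * (T - r))^n / n.factorial * (MQ1' * (CUl * ‖x‖)) +
              MQ2' * (MD * (K * (T - r))^n / n.factorial * (CUl * ‖x‖)) :=
          le_trans (norm_add_le _ _) (add_le_add hih1 hih2)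
        calc ‖Ub t r ((Q r - P r) (Q1 r (Ul r t x)) + Q2 r ((Q r - P r) (Ul r t x)))‖
            ≤ CUb * (MD * (K * (T - r))^n / n.factorial * (MQ1' * (CUl * ‖x‖)) +
                MQ2' * (MD * (K * (T - r))^n / n.factorial * (CUl * ‖x‖))) :=
              le_trans ((Ub t r).le_opNorm _)
                (mul_le_mul (hCUb t r ht.1 hr1 hrT) hsum (norm_nonneg _) hCUbnn)
          _ = (MD * K^(n+1) * ‖x‖ / (n.factorial : ℝ)) * (T - r)^n := by
              rw [hK, mul_pow]
              ring
      have hb := intervalIntegral.norm_integral_le_abs_of_norm_le hae hgint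
      have hA : (0:ℝ) ≤ MD * K^(n+1) * ‖x‖ / (n.factorial : ℝ) :=
        div_nonneg (mul_nonneg (mul_nonneg hMDnn (pow_nonneg hKnn _))
          (norm_nonneg x)) (Nat.cast_nonneg _)
      have hfac : ((n.factorial : ℝ)) ≠ 0 := Nat.cast_ne_zero.mpr n.factorial_ne_zero
      calc ‖∫ r in t..T, Ub t r ((Q r - P r) (Q1 r (Ul r t x)) +
              Q2 r ((Q r - P r) (Ul r t x)))‖
          ≤ |∫ r in t..T, (MD * K^(n+1) * ‖x‖ / (n.factorial : ℝ)) * (T - r)^n| := hb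
        _ = MD * K^(n+1) * ‖x‖ / (n.factorial : ℝ) * ((T - t)^(n+1) / ((n:ℝ)+1)) := by
            rw [intervalIntegral.integral_const_mul, aux_int_pow]
            exact abs_of_nonneg (mul_nonneg hA
              (div_nonneg (pow_nonneg hTt _) (by positivity)))
        _ = MD * (K * (T - t))^(n+1) / ((n+1).factorial : ℝ) * ‖x‖ := by
            rw [Nat.factorial_succ, mul_pow]
            push_cast
            field_simp
  -- conclude: the difference vanishes
  intro t ht
  ext x
  have h0 := FloorSemiring.tendsto_pow_div_factorial_atTop (K * (T - t))
  have h1 := (h0.const_mul MD).mul_const ‖x‖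
  simp only [mul_zero, zero_mul] at h1
  have hlim : Filter.Tendsto (fun n : ℕ => MD * (K * (T - t))^n / n.factorial * ‖x‖)
      Filter.atTop (nhds 0) := h1.congr (fun n => by ring)
  have hle : ‖(Q t - P t) x‖ ≤ 0 :=
    ge_of_tendsto hlim (Filter.Eventually.of_forall (fun n => hiter n t ht x))
  have hzero : (Q t - P t) x = 0 := norm_le_zero_iff.mp hle
  rw [ContinuousLinearMap.sub_apply] at hzero
  exact sub_eq_zero.mp hzero
end
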